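/- arXiv:2302.13873 — 8 statements merged into one kernel-verified Lean document; each statement's English description precedes it below -/
import Mathlib

section
/- Let {A_n}_{n≥0} be a sequence of bounded self-adjoint operators on H with A_0 = I and ‖A_n‖ ≤ 1 for all n, such that for every n the Hankel block matrix H_n = [A_{i+j}]_{0≤i,j≤n} is positive and H_n^{(2)} = [A_{i+j+2}]_{0≤i,j≤n} satisfies H_n^{(2)} ≤ H_n. Then there exists a Hilbert space K containing H and a self-adjoint contraction B on K such that A_n = P_H B^n |_H for all n ≥ 0. -/
open ContinuousLinearMap
open scoped ComplexOrder

set_option maxHeartbeats 1000000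
set_option synthInstance.maxHeartbeats 400000

universe u

set_option linter.unusedSectionVars false

namespace Stmt3Aux
variable {H : Type u} [NormedAddCommGroup H] [InnerProductSpace ℂ H] [CompleteSpace H]
  (A : ℕ → H →L[ℂ] H)

noncomputable def Bk (m : ℕ → ℕ → ℕ) (f g : ℕ →₀ H) : ℂ :=
  ∑ i ∈ f.support, ∑ j ∈ g.support, (inner ℂ (f i) (A (m i j) (g j)) : ℂ)

lemma Bk_eq (m : ℕ → ℕ → ℕ) (f g : ℕ →₀ H) {s t : Finset ℕ}
    (hs : f.support ⊆ s) (ht : g.support ⊆ t) :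
    Bk A m f g = ∑ i ∈ s, ∑ j ∈ t, (inner ℂ (f i) (A (m i j) (g j)) : ℂ) := by
  unfold Bk
  rw [Finset.sum_subset hs]
  · refine Finset.sum_congr rfl fun i _ => ?_
    rw [Finset.sum_subset ht]
    intro j _ hj
    rw [Finsupp.notMem_support_iff.mp hj]
    simp
  · intro i _ hi
    rw [Finsupp.notMem_support_iff.mp hi]
    simp

lemma Bk_add_left (m : ℕ → ℕ → ℕ) (f f' g : ℕ →₀ H) :
    Bk A m (f + f') g = Bk A m f g + Bk A m f' g := by
  rw [Bk_eq A m (f + f') g (s := f.support ∪ f'.support) (t := g.support)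
      (Finsupp.support_add) subset_rfl,
    Bk_eq A m f g (s := f.support ∪ f'.support) (t := g.support)
      Finset.subset_union_left subset_rfl,
    Bk_eq A m f' g (s := f.support ∪ f'.support) (t := g.support)
      Finset.subset_union_right subset_rfl,
    ← Finset.sum_add_distrib]
  refine Finset.sum_congr rfl fun i _ => ?_
  rw [← Finset.sum_add_distrib]
  refine Finset.sum_congr rfl fun j _ => ?_
  rw [Finsupp.add_apply, inner_add_left]

lemma Bk_smul_left (m : ℕ → ℕ → ℕ) (r : ℂ) (f g : ℕ →₀ H) :
    Bk A m (r • f) g = (starRingEnd ℂ) r * Bk A m f g := by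
  rw [Bk_eq A m (r • f) g (s := f.support) (t := g.support)
      Finsupp.support_smul subset_rfl, Bk, Finset.mul_sum]
  refine Finset.sum_congr rfl fun i _ => ?_
  rw [Finset.mul_sum]
  refine Finset.sum_congr rfl fun j _ => ?_
  rw [Finsupp.smul_apply, inner_smul_left]

lemma Bk_conj (m : ℕ → ℕ → ℕ) (hA : ∀ n, IsSelfAdjoint (A n)) (hm : ∀ i j, m j i = m i j)
    (f g : ℕ →₀ H) :
    (starRingEnd ℂ) (Bk A m g f) = Bk A m f g := by
  unfold Bk
  rw [map_sum]
  rw [Finset.sum_comm]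
  refine Finset.sum_congr rfl fun i _ => ?_
  rw [map_sum]
  refine Finset.sum_congr rfl fun j _ => ?_
  rw [inner_conj_symm, hm i j]
  exact isSelfAdjoint_iff_isSymmetric.mp (hA _) _ _


lemma support_subset_range (f : ℕ →₀ H) : f.support ⊆ Finset.range (f.support.sup id + 1) := by
  intro i hi
  exact Finset.mem_range.mpr (Nat.lt_succ_of_le (Finset.le_sup (f := id) hi))

lemma fin_sum_to_range (n : ℕ) (F : ℕ → ℕ → ℂ) :
    ∑ i : Fin (n + 1), ∑ j : Fin (n + 1), F i j
      = ∑ i ∈ Finset.range (n + 1), ∑ j ∈ Finset.range (n + 1), F i j := by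
  rw [Fin.sum_univ_eq_sum_range (fun i => ∑ j : Fin (n + 1), F i j)]
  exact Finset.sum_congr rfl fun i _ => Fin.sum_univ_eq_sum_range _ _

lemma Bk_single (m : ℕ → ℕ → ℕ) (a b : ℕ) (x y : H) :
    Bk A m (Finsupp.single a x) (Finsupp.single b y) = (inner ℂ x (A (m a b) y) : ℂ) := by
  rw [Bk_eq A m _ _ (s := {a}) (t := {b}) Finsupp.support_single_subset
    Finsupp.support_single_subset, Finset.sum_singleton, Finset.sum_singleton,
    Finsupp.single_eq_same, Finsupp.single_eq_same]

/-- The shift operator. -/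
noncomputable def shiftL : (ℕ →₀ H) →ₗ[ℂ] (ℕ →₀ H) := Finsupp.lmapDomain H ℂ Nat.succ

lemma shiftL_single (a : ℕ) (x : H) :
    shiftL (Finsupp.single a x) = Finsupp.single (a + 1) x := by
  simp [shiftL, Finsupp.mapDomain_single]

lemma Bk_shift_left (m : ℕ → ℕ → ℕ) (f g : ℕ →₀ H) :
    Bk A m (shiftL f) g
      = ∑ i ∈ f.support, ∑ j ∈ g.support, (inner ℂ (f i) (A (m (i + 1) j) (g j)) : ℂ) := by
  simp only [shiftL, Finsupp.lmapDomain_apply]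
  rw [Bk_eq A m _ _ (s := f.support.image Nat.succ) (t := g.support)
    Finsupp.mapDomain_support subset_rfl,
    Finset.sum_image (fun a _ b _ h => Nat.succ_injective h)]
  refine Finset.sum_congr rfl fun i _ => Finset.sum_congr rfl fun j _ => ?_
  rw [Finsupp.mapDomain_apply Nat.succ_injective f i]

lemma Bk_shift_right (m : ℕ → ℕ → ℕ) (f g : ℕ →₀ H) :
    Bk A m f (shiftL g)
      = ∑ i ∈ f.support, ∑ j ∈ g.support, (inner ℂ (f i) (A (m i (j + 1)) (g j)) : ℂ) := by
  simp only [shiftL, Finsupp.lmapDomain_apply]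
  rw [Bk_eq A m _ _ (s := f.support) (t := g.support.image Nat.succ)
    subset_rfl Finsupp.mapDomain_support]
  refine Finset.sum_congr rfl fun i _ => ?_
  rw [Finset.sum_image (fun a _ b _ h => Nat.succ_injective h)]
  refine Finset.sum_congr rfl fun j _ => ?_
  rw [Finsupp.mapDomain_apply Nat.succ_injective g j]


lemma Bk_shift_left' (m : ℕ → ℕ → ℕ) (f g : ℕ →₀ H) :
    Bk A m (shiftL f) g = Bk A (fun i j => m (i + 1) j) f g :=
  Bk_shift_left A m f g

lemma Bk_shift_right' (m : ℕ → ℕ → ℕ) (f g : ℕ →₀ H) :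
    Bk A m f (shiftL g) = Bk A (fun i j => m i (j + 1)) f g :=
  Bk_shift_right A m f g

lemma Bk_kernel_congr {m m' : ℕ → ℕ → ℕ} (hm : ∀ i j, m i j = m' i j) (f g : ℕ →₀ H) :
    Bk A m f g = Bk A m' f g :=
  Finset.sum_congr rfl fun i _ => Finset.sum_congr rfl fun j _ => by rw [hm i j]

lemma Bk_nonneg
    (hHankel : ∀ (n : ℕ) (x : Fin (n + 1) → H),
      0 ≤ ∑ i : Fin (n + 1), ∑ j : Fin (n + 1),
        (inner ℂ (x i) (A ((i : ℕ) + (j : ℕ)) (x j)) : ℂ))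
    (f : ℕ →₀ H) : 0 ≤ Bk A (fun i j => i + j) f f := by
  have h := hHankel (f.support.sup id) (fun i => f i)
  rw [fin_sum_to_range (f.support.sup id)
    (fun a b => (inner ℂ (f a) (A (a + b) (f b)) : ℂ))] at h
  rwa [Bk_eq A _ f f (support_subset_range f) (support_subset_range f)]

lemma Bk_contr
    (hHankel2 : ∀ (n : ℕ) (x : Fin (n + 1) → H),
      (∑ i : Fin (n + 1), ∑ j : Fin (n + 1),
          (inner ℂ (x i) (A ((i : ℕ) + (j : ℕ) + 2) (x j)) : ℂ)) ≤
        ∑ i : Fin (n + 1), ∑ j : Fin (n + 1),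
          (inner ℂ (x i) (A ((i : ℕ) + (j : ℕ)) (x j)) : ℂ))
    (f : ℕ →₀ H) : Bk A (fun i j => i + j + 2) f f ≤ Bk A (fun i j => i + j) f f := by
  have h := hHankel2 (f.support.sup id) (fun i => f i)
  rw [fin_sum_to_range (f.support.sup id)
      (fun a b => (inner ℂ (f a) (A (a + b + 2) (f b)) : ℂ)),
    fin_sum_to_range (f.support.sup id)
      (fun a b => (inner ℂ (f a) (A (a + b) (f b)) : ℂ))] at h
  rw [Bk_eq A _ f f (support_subset_range f) (support_subset_range f),
    Bk_eq A _ f f (support_subset_range f) (support_subset_range f)]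
  exact h

/-- The pre-inner-product core on `ℕ →₀ H`. -/
noncomputable def core (hAsa : ∀ n, IsSelfAdjoint (A n))
    (hHankel : ∀ (n : ℕ) (x : Fin (n + 1) → H),
      0 ≤ ∑ i : Fin (n + 1), ∑ j : Fin (n + 1),
        (inner ℂ (x i) (A ((i : ℕ) + (j : ℕ)) (x j)) : ℂ)) :
    PreInnerProductSpace.Core ℂ (ℕ →₀ H) where
  inner f g := Bk A (fun i j => i + j) f g
  conj_inner_symm f g := Bk_conj A _ hAsa (fun i j => Nat.add_comm j i) f g
  re_inner_nonneg f := by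
    have := Bk_nonneg A hHankel f
    rw [Complex.le_def] at this
    simpa using this.1
  add_left := Bk_add_left A _
  smul_left f g r := Bk_smul_left A _ r f g

end Stmt3Aux

open Stmt3Aux

/-- If `A n` are self-adjoint contractions with `A 0 = I`, every Hankel matrix
`H_n = [A_{i+j}]` is positive, and `H_n^{(2)} = [A_{i+j+2}] ≤ H_n`, then the sequence
admits a self-adjoint contraction dilation. -/
theorem stmt_3 {H : Type u} [NormedAddCommGroup H] [InnerProductSpace ℂ H] [CompleteSpace H]
    (A : ℕ → H →L[ℂ] H) (hA0 : A 0 = 1) (hAsa : ∀ n, IsSelfAdjoint (A n))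
    (hAnorm : ∀ n, ‖A n‖ ≤ 1)
    (hHankel : ∀ (n : ℕ) (x : Fin (n + 1) → H),
      0 ≤ ∑ i : Fin (n + 1), ∑ j : Fin (n + 1),
        (inner ℂ (x i) (A ((i : ℕ) + (j : ℕ)) (x j)) : ℂ))
    (hHankel2 : ∀ (n : ℕ) (x : Fin (n + 1) → H),
      (∑ i : Fin (n + 1), ∑ j : Fin (n + 1),
          (inner ℂ (x i) (A ((i : ℕ) + (j : ℕ) + 2) (x j)) : ℂ)) ≤
        ∑ i : Fin (n + 1), ∑ j : Fin (n + 1),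
          (inner ℂ (x i) (A ((i : ℕ) + (j : ℕ)) (x j)) : ℂ)) :
    ∃ (K : Type u) (_ : NormedAddCommGroup K) (_ : InnerProductSpace ℂ K)
      (_ : CompleteSpace K) (ι : H →ₗᵢ[ℂ] K) (B : K →L[ℂ] K),
      IsSelfAdjoint B ∧ ‖B‖ ≤ 1 ∧
        ∀ n : ℕ, A n = adjoint ι.toContinuousLinearMap ∘L (B ^ n) ∘L
          ι.toContinuousLinearMap := by
  classical
  letI c : PreInnerProductSpace.Core ℂ (ℕ →₀ H) := core A hAsa hHankel
  letI : SeminormedAddCommGroup (ℕ →₀ H) :=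
    @InnerProductSpace.Core.toSeminormedAddCommGroup ℂ (ℕ →₀ H) _ _ _ c
  letI : NormedSpace ℂ (ℕ →₀ H) :=
    @InnerProductSpace.Core.toNormedSpace ℂ (ℕ →₀ H) _ _ _ c
  letI : InnerProductSpace ℂ (ℕ →₀ H) :=
    { toInner := c.toInner
      norm_sq_eq_re_inner := fun x => by exact Real.sq_sqrt (c.re_inner_nonneg x)
      conj_inner_symm := by exact c.conj_inner_symm
      add_left := by exact c.add_left
      smul_left := by exact c.smul_left }
  have hinner : ∀ f g : ℕ →₀ H, (inner ℂ f g : ℂ) = Bk A (fun i j => i + j) f g :=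
    fun _ _ => rfl
  have hnormV : ∀ f : ℕ →₀ H, ‖f‖ = Real.sqrt (RCLike.re (inner ℂ f f : ℂ)) :=
    fun f => norm_eq_sqrt_re_inner (𝕜 := ℂ) f
  have hbound : ∀ f : ℕ →₀ H, ‖shiftL f‖ ≤ 1 * ‖f‖ := by
    intro f
    rw [one_mul, hnormV, hnormV]
    apply Real.sqrt_le_sqrt
    have h1 : (inner ℂ (shiftL f) (shiftL f) : ℂ) = Bk A (fun i j => i + j + 2) f f := by
      rw [hinner, Bk_shift_left', Bk_shift_right']
      exact Bk_kernel_congr A (fun i j => by omega) f f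
    have h2 := Bk_contr A hHankel2 f
    rw [Complex.le_def] at h2
    rw [h1, hinner]
    simpa using h2.1
  let Sc : (ℕ →₀ H) →L[ℂ] (ℕ →₀ H) := LinearMap.mkContinuous shiftL 1 hbound
  have hSc : ∀ f, Sc f = shiftL f := fun _ => rfl
  have hsymV : ∀ f g : ℕ →₀ H, (inner ℂ (Sc f) g : ℂ) = inner ℂ f (Sc g) := by
    intro f g
    rw [hinner, hinner, hSc, hSc, Bk_shift_left', Bk_shift_right']
    exact Bk_kernel_congr A (fun i j => by omega) f g
  set Q := SeparationQuotient (ℕ →₀ H) with hQ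
  let Sq0 : Q →ₗ[ℂ] Q :=
    { toFun := SeparationQuotient.lift (fun f => SeparationQuotient.mk (Sc f))
        (fun x y hxy => SeparationQuotient.mk_eq_mk.mpr (hxy.map Sc.continuous))
      map_add' := by
        intro a b
        obtain ⟨x, rfl⟩ := SeparationQuotient.surjective_mk a
        obtain ⟨y, rfl⟩ := SeparationQuotient.surjective_mk b
        exact congrArg SeparationQuotient.mk (map_add Sc x y)
      map_smul' := by
        intro r a
        obtain ⟨x, rfl⟩ := SeparationQuotient.surjective_mk a
        exact congrArg SeparationQuotient.mk (map_smul Sc r x) }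
  have hSq0_mk : ∀ f : ℕ →₀ H, Sq0 (SeparationQuotient.mk f) = SeparationQuotient.mk (Sc f) :=
    fun _ => rfl
  have hbQ : ∀ a : Q, ‖Sq0 a‖ ≤ 1 * ‖a‖ := by
    intro a
    obtain ⟨x, rfl⟩ := SeparationQuotient.surjective_mk a
    rw [hSq0_mk, SeparationQuotient.norm_mk, SeparationQuotient.norm_mk]
    exact hbound x
  let Sq : Q →L[ℂ] Q := Sq0.mkContinuous 1 hbQ
  have hSq_mk : ∀ f : ℕ →₀ H, Sq (SeparationQuotient.mk f) = SeparationQuotient.mk (Sc f) :=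
    fun _ => rfl
  have hSqn : ∀ a : Q, ‖Sq a‖ ≤ ‖a‖ := fun a => by exact (by simpa using hbQ a : ‖Sq0 a‖ ≤ ‖a‖)
  have hsymQ : ∀ a b : Q, (inner ℂ (Sq a) b : ℂ) = inner ℂ a (Sq b) := by
    intro a b
    obtain ⟨x, rfl⟩ := SeparationQuotient.surjective_mk a
    obtain ⟨y, rfl⟩ := SeparationQuotient.surjective_mk b
    rw [hSq_mk, hSq_mk, SeparationQuotient.inner_mk_mk, SeparationQuotient.inner_mk_mk]
    exact hsymV x y
  refine ⟨UniformSpace.Completion Q, inferInstance, inferInstance, inferInstance, ?_⟩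
  set K := UniformSpace.Completion Q with hK
  let e : Q →L[ℂ] K := UniformSpace.Completion.toComplL
  have he : ∀ a : Q, e a = (a : K) := fun _ => rfl
  have hdense : DenseRange ⇑e := by
    rw [show ⇑e = ((↑) : Q → K) from rfl]
    exact UniformSpace.Completion.denseRange_coe
  have hui : IsUniformInducing ⇑e := UniformSpace.Completion.coe_isometry.isUniformInducing
  let B : K →L[ℂ] K := ContinuousLinearMap.extend (e.comp Sq) e
  have hB_coe : ∀ a : Q, B (a : K) = ((Sq a : Q) : K) := fun a => by
    exact ContinuousLinearMap.extend_eq (e.comp Sq) hdense hui a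
  have hBnorm : ∀ z : K, ‖B z‖ ≤ ‖z‖ := by
    intro z
    refine UniformSpace.Completion.induction_on z
      (isClosed_le (B.continuous.norm) continuous_norm) (fun a => ?_)
    rw [hB_coe, UniformSpace.Completion.norm_coe, UniformSpace.Completion.norm_coe]
    exact hSqn a
  have hBpow : ∀ (n : ℕ) (a : Q), (B ^ n) (a : K) = (((Sq ^ n) a : Q) : K) := by
    intro n
    induction n with
    | zero => intro a; simp
    | succ n ih =>
      intro a
      rw [pow_succ, pow_succ, ContinuousLinearMap.mul_apply, ContinuousLinearMap.mul_apply,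
        hB_coe, ih]
  have hsingle : ∀ (n : ℕ) (x : H), (Sq ^ n) (SeparationQuotient.mk (Finsupp.single 0 x))
      = SeparationQuotient.mk (Finsupp.single n x) := by
    intro n x
    induction n with
    | zero => simp
    | succ k ih =>
      rw [pow_succ', ContinuousLinearMap.mul_apply, ih, hSq_mk, hSc, shiftL_single]
  let ιlin : H →ₗ[ℂ] K :=
    { toFun := fun x => ((SeparationQuotient.mk (Finsupp.single 0 x) : Q) : K)
      map_add' := by
        intro x y
        simp only [Finsupp.single_add, SeparationQuotient.mk_add,
          UniformSpace.Completion.coe_add]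
      map_smul' := by
        intro r x
        simp only [← Finsupp.smul_single, SeparationQuotient.mk_smul,
          UniformSpace.Completion.coe_smul, RingHom.id_apply] }
  have hι_norm : ∀ x : H, ‖ιlin x‖ = ‖x‖ := by
    intro x
    show ‖((SeparationQuotient.mk (Finsupp.single 0 x) : Q) : K)‖ = ‖x‖
    rw [UniformSpace.Completion.norm_coe, SeparationQuotient.norm_mk, hnormV,
      hinner, Bk_single, hA0]
    rw [ContinuousLinearMap.one_apply]
    exact (norm_eq_sqrt_re_inner (𝕜 := ℂ) x).symm
  let ι : H →ₗᵢ[ℂ] K := ⟨ιlin, hι_norm⟩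
  have hι : ∀ x : H, ι.toContinuousLinearMap x
      = ((SeparationQuotient.mk (Finsupp.single 0 x) : Q) : K) := fun _ => rfl
  refine ⟨ι, B, ?_, ?_, ?_⟩
  · rw [ContinuousLinearMap.isSelfAdjoint_iff_isSymmetric]
    intro z w
    refine UniformSpace.Completion.induction_on₂ z w
      (isClosed_eq ((B.continuous.comp continuous_fst).inner continuous_snd)
        (continuous_fst.inner (B.continuous.comp continuous_snd))) (fun a b => ?_)
    rw [ContinuousLinearMap.coe_coe, hB_coe, hB_coe, UniformSpace.Completion.inner_coe,
      UniformSpace.Completion.inner_coe]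
    exact hsymQ a b
  · exact B.opNorm_le_bound zero_le_one (fun z => by simpa using hBnorm z)
  · intro n
    ext x
    refine ext_inner_left ℂ (fun y => ?_)
    rw [ContinuousLinearMap.comp_apply, ContinuousLinearMap.comp_apply,
      ContinuousLinearMap.adjoint_inner_right, hι x, hBpow, hsingle, hι y,
      UniformSpace.Completion.inner_coe, SeparationQuotient.inner_mk_mk, hinner, Bk_single]
    norm_num
end

section
/- Let {A_n}_{n≥0} be a sequence of bounded self-adjoint operators on H with A_0 = I admitting a self-adjoint contraction dilation B on K ⊇ H. Then for every n ≥ 0 the Hankel block matrices satisfy H_n ≥ 0 and H_n^{(2)} ≤ H_n, where H_n = [A_{i+j}]_{0≤i,j≤n} and H_n^{(2)} = [A_{i+j+2}]_{0≤i,j≤n}. -/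
open ContinuousLinearMap
open scoped ComplexOrder

set_option maxHeartbeats 1000000
set_option synthInstance.maxHeartbeats 400000

lemma stmt4_key {H : Type*} [NormedAddCommGroup H] [InnerProductSpace ℂ H] [CompleteSpace H]
    {K : Type*} [NormedAddCommGroup K] [InnerProductSpace ℂ K] [CompleteSpace K]
    (A : ℕ → H →L[ℂ] H)
    (ι : H →ₗᵢ[ℂ] K) (B : K →L[ℂ] K) (hB : IsSelfAdjoint B)
    (hdil : ∀ n : ℕ,
      A n = adjoint ι.toContinuousLinearMap ∘L (B ^ n) ∘L ι.toContinuousLinearMap)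
    (a b : ℕ) (u v : H) :
    (inner ℂ u (A (a + b) v) : ℂ) = inner ℂ ((B ^ a) (ι u)) ((B ^ b) (ι v)) := by
  rw [hdil]
  simp only [ContinuousLinearMap.comp_apply, ContinuousLinearMap.adjoint_inner_right,
    LinearIsometry.coe_toContinuousLinearMap, pow_add, ContinuousLinearMap.mul_apply]
  rw [← ContinuousLinearMap.adjoint_inner_left, (hB.pow a).adjoint_eq]

/-- If a sequence of self-adjoint operators `A n` with `A 0 = I` admits a self-adjoint
contraction dilation, then for every `n` the Hankel matrices satisfy `H_n ≥ 0` and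
`H_n^{(2)} ≤ H_n`. -/
theorem stmt_4 {H : Type*} [NormedAddCommGroup H] [InnerProductSpace ℂ H] [CompleteSpace H]
    {K : Type*} [NormedAddCommGroup K] [InnerProductSpace ℂ K] [CompleteSpace K]
    (A : ℕ → H →L[ℂ] H) (hA0 : A 0 = 1) (hAsa : ∀ n, IsSelfAdjoint (A n))
    (ι : H →ₗᵢ[ℂ] K) (B : K →L[ℂ] K) (hB : IsSelfAdjoint B) (hBnorm : ‖B‖ ≤ 1)
    (hdil : ∀ n : ℕ,
      A n = adjoint ι.toContinuousLinearMap ∘L (B ^ n) ∘L ι.toContinuousLinearMap) :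
    (∀ (n : ℕ) (x : Fin (n + 1) → H),
      0 ≤ ∑ i : Fin (n + 1), ∑ j : Fin (n + 1),
        (inner ℂ (x i) (A ((i : ℕ) + (j : ℕ)) (x j)) : ℂ)) ∧
    (∀ (n : ℕ) (x : Fin (n + 1) → H),
      (∑ i : Fin (n + 1), ∑ j : Fin (n + 1),
          (inner ℂ (x i) (A ((i : ℕ) + (j : ℕ) + 2) (x j)) : ℂ)) ≤
        ∑ i : Fin (n + 1), ∑ j : Fin (n + 1),
          (inner ℂ (x i) (A ((i : ℕ) + (j : ℕ)) (x j)) : ℂ)) := by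
  have hsum : ∀ (n : ℕ) (x : Fin (n + 1) → H),
      (∑ i : Fin (n + 1), ∑ j : Fin (n + 1),
        (inner ℂ (x i) (A ((i : ℕ) + (j : ℕ)) (x j)) : ℂ)) =
      inner ℂ (∑ i : Fin (n + 1), (B ^ (i : ℕ)) (ι (x i)))
            (∑ i : Fin (n + 1), (B ^ (i : ℕ)) (ι (x i))) := by
    intro n x
    rw [sum_inner]
    refine Finset.sum_congr rfl fun i _ => ?_
    rw [inner_sum]
    exact Finset.sum_congr rfl fun j _ => stmt4_key A ι B hB hdil _ _ _ _
  have hsum2 : ∀ (n : ℕ) (x : Fin (n + 1) → H),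
      (∑ i : Fin (n + 1), ∑ j : Fin (n + 1),
        (inner ℂ (x i) (A ((i : ℕ) + (j : ℕ) + 2) (x j)) : ℂ)) =
      inner ℂ (B (∑ i : Fin (n + 1), (B ^ (i : ℕ)) (ι (x i))))
            (B (∑ i : Fin (n + 1), (B ^ (i : ℕ)) (ι (x i)))) := by
    intro n x
    rw [map_sum, sum_inner]
    refine Finset.sum_congr rfl fun i _ => ?_
    rw [inner_sum]
    refine Finset.sum_congr rfl fun j _ => ?_
    have : (i : ℕ) + (j : ℕ) + 2 = ((i : ℕ) + 1) + ((j : ℕ) + 1) := by ring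
    rw [this, stmt4_key A ι B hB hdil]
    simp [pow_succ', ContinuousLinearMap.mul_apply]
  constructor
  · intro n x
    rw [hsum n x, inner_self_eq_norm_sq_to_K]
    norm_cast
    positivity
  · intro n x
    rw [hsum n x, hsum2 n x, inner_self_eq_norm_sq_to_K, inner_self_eq_norm_sq_to_K]
    set y := ∑ i : Fin (n + 1), (B ^ (i : ℕ)) (ι (x i))
    have h1 : ‖B y‖ ≤ ‖y‖ := by
      calc ‖B y‖ ≤ ‖B‖ * ‖y‖ := B.le_opNorm y
        _ ≤ 1 * ‖y‖ := by apply mul_le_mul_of_nonneg_right hBnorm (norm_nonneg y)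
        _ = ‖y‖ := one_mul _
    have h2 : ‖B y‖ ^ 2 ≤ ‖y‖ ^ 2 := by
      exact pow_le_pow_left₀ (norm_nonneg _) h1 2
    norm_cast
end

section
/- Let {A_n}_{n≥0} be a sequence of bounded self-adjoint operators on H with A_0 = I admitting a minimal self-adjoint dilation B on K ⊇ H. Then K decomposes as an orthogonal direct sum K = H_0 ⊕ H_1 ⊕ H_2 ⊕ ⋯ with H_0 = H such that with respect to this decomposition B is block tridiagonal: B_{ij} = 0 whenever |i - j| > 1, each diagonal block B_{nn} is self-adjoint, B_{n(n-1)}* = B_{(n-1)n}, and H_n is the closure of B_{n(n-1)}(H_{n-1}) for all n ≥ 1. -/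
open ContinuousLinearMap

set_option maxHeartbeats 1000000
set_option synthInstance.maxHeartbeats 400000

set_option linter.unusedSectionVars false

namespace Stmt7Aux

variable {K : Type*} [NormedAddCommGroup K] [InnerProductSpace ℂ K] [CompleteSpace K]

/-- The increasing sequence of spaces `Kₙ = closure (span of ⋃_{k ≤ n} Bᵏ Hs)`. -/
noncomputable def Ks (B : K →L[ℂ] K) (Hs : Submodule ℂ K) (n : ℕ) : Submodule ℂ K :=
  (⨆ k : Fin (n + 1), Submodule.map ((B ^ (k : ℕ) : K →L[ℂ] K) : K →ₗ[ℂ] K) Hs).topologicalClosure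

theorem isClosed_Ks (B : K →L[ℂ] K) (Hs : Submodule ℂ K) (n : ℕ) :
    IsClosed ((Ks B Hs n : Set K)) :=
  Submodule.isClosed_topologicalClosure _

theorem map_pow_le_Ks (B : K →L[ℂ] K) (Hs : Submodule ℂ K) {k n : ℕ} (h : k ≤ n) :
    Submodule.map ((B ^ k : K →L[ℂ] K) : K →ₗ[ℂ] K) Hs ≤ Ks B Hs n :=
  le_trans (le_iSup (fun j : Fin (n + 1) => Submodule.map ((B ^ (j : ℕ) : K →L[ℂ] K) : K →ₗ[ℂ] K) Hs)
    ⟨k, Nat.lt_succ_of_le h⟩) (Submodule.le_topologicalClosure _)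

theorem Ks_mono (B : K →L[ℂ] K) (Hs : Submodule ℂ K) : Monotone (Ks B Hs) := by
  intro m n hmn
  refine Submodule.topologicalClosure_mono (iSup_le fun k => ?_)
  exact le_iSup (fun j : Fin (n + 1) => Submodule.map ((B ^ (j : ℕ) : K →L[ℂ] K) : K →ₗ[ℂ] K) Hs)
    ⟨(k : ℕ), lt_of_lt_of_le k.2 (Nat.succ_le_succ hmn)⟩

theorem Hs_le_Ks (B : K →L[ℂ] K) (Hs : Submodule ℂ K) (n : ℕ) : Hs ≤ Ks B Hs n := by
  intro x hx
  have : x ∈ Submodule.map ((B ^ 0 : K →L[ℂ] K) : K →ₗ[ℂ] K) Hs := ⟨x, hx, by simp⟩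
  exact map_pow_le_Ks B Hs (Nat.zero_le n) this

theorem Ks_zero (B : K →L[ℂ] K) (Hs : Submodule ℂ K) (hHs : IsClosed (Hs : Set K)) :
    Ks B Hs 0 = Hs := by
  have h1 : (⨆ k : Fin 1, Submodule.map ((B ^ (k : ℕ) : K →L[ℂ] K) : K →ₗ[ℂ] K) Hs) = Hs := by
    apply le_antisymm
    · refine iSup_le fun k => ?_
      have : (k : ℕ) = 0 := by omega
      rw [this]
      intro x hx
      rcases hx with ⟨y, hy, rfl⟩
      simpa using hy
    · intro x hx
      exact le_iSup (fun j : Fin 1 => Submodule.map ((B ^ (j : ℕ) : K →L[ℂ] K) : K →ₗ[ℂ] K) Hs) ⟨0, by omega⟩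
        ⟨x, hx, by simp⟩
  rw [Ks, h1]
  exact le_antisymm (Submodule.topologicalClosure_minimal _ le_rfl hHs)
    (Submodule.le_topologicalClosure _)

theorem mapB_Ks_le (B : K →L[ℂ] K) (Hs : Submodule ℂ K) (n : ℕ) :
    Submodule.map (B : K →ₗ[ℂ] K) (Ks B Hs n) ≤ Ks B Hs (n + 1) := by
  have h1 : Submodule.map (B : K →ₗ[ℂ] K) (⨆ k : Fin (n + 1), Submodule.map ((B ^ (k : ℕ) : K →L[ℂ] K) : K →ₗ[ℂ] K) Hs) ≤
      Ks B Hs (n + 1) := by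
    rw [Submodule.map_iSup]
    refine iSup_le fun k => ?_
    have : Submodule.map (B : K →ₗ[ℂ] K) (Submodule.map ((B ^ (k : ℕ) : K →L[ℂ] K) : K →ₗ[ℂ] K) Hs) ≤
        Submodule.map ((B ^ ((k : ℕ) + 1) : K →L[ℂ] K) : K →ₗ[ℂ] K) Hs := by
      rintro x ⟨y, ⟨z, hz, rfl⟩, rfl⟩
      exact ⟨z, hz, by rw [pow_succ' B (k : ℕ)]; simp [ContinuousLinearMap.mul_apply]⟩
    exact le_trans this (map_pow_le_Ks B Hs (Nat.succ_le_succ k.is_le))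
  have h2 := Submodule.topologicalClosure_map B
    (⨆ k : Fin (n + 1), Submodule.map ((B ^ (k : ℕ) : K →L[ℂ] K) : K →ₗ[ℂ] K) Hs)
  refine le_trans ?_ (le_trans h2 ?_)
  · exact le_of_eq rfl
  · refine Submodule.topologicalClosure_minimal _ ?_ (isClosed_Ks B Hs (n + 1))
    exact h1

/-- The orthogonal "new" spaces: `H₀ = Hs`, `Hₙ₊₁ = Kₙ₊₁ ⊓ Kₙᗮ`. -/
noncomputable def Hseq (B : K →L[ℂ] K) (Hs : Submodule ℂ K) : ℕ → Submodule ℂ K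
  | 0 => Hs
  | n + 1 => Ks B Hs (n + 1) ⊓ (Ks B Hs n)ᗮ

theorem Hseq_le_Ks (B : K →L[ℂ] K) (Hs : Submodule ℂ K) (n : ℕ) :
    Hseq B Hs n ≤ Ks B Hs n := by
  cases n with
  | zero => exact Hs_le_Ks B Hs 0
  | succ m => exact inf_le_left

theorem Hseq_succ_le_orth (B : K →L[ℂ] K) (Hs : Submodule ℂ K) (n : ℕ) :
    Hseq B Hs (n + 1) ≤ (Ks B Hs n)ᗮ :=
  inf_le_right

theorem Ks_decomp (B : K →L[ℂ] K) (Hs : Submodule ℂ K) (n : ℕ) :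
    Ks B Hs (n + 1) ≤ Ks B Hs n ⊔ Hseq B Hs (n + 1) := by
  haveI : CompleteSpace (Ks B Hs n) := (isClosed_Ks B Hs n).completeSpace_coe
  intro x hx
  set p : K := ((Ks B Hs n).orthogonalProjectionOnto x : K) with hp
  have hpmem : p ∈ Ks B Hs n := ((Ks B Hs n).orthogonalProjectionOnto x).2
  have hxp : x - p ∈ (Ks B Hs n)ᗮ := (Ks B Hs n).sub_starProjection_mem_orthogonal x
  have hxp2 : x - p ∈ Ks B Hs (n + 1) :=
    Submodule.sub_mem _ hx (Ks_mono B Hs (Nat.le_succ n) hpmem)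
  have : x = p + (x - p) := by abel
  rw [this]
  exact Submodule.add_mem _ (Submodule.mem_sup_left hpmem)
    (Submodule.mem_sup_right ⟨hxp2, hxp⟩)

/-- `Tₙ = (1 - P_{Kₙ}) ∘ B`, sending `x` to the component of `B x` orthogonal to `Kₙ`. -/
noncomputable def Top (B : K →L[ℂ] K) (Hs : Submodule ℂ K) (n : ℕ) : K →L[ℂ] K :=
  haveI : CompleteSpace (Ks B Hs n) := (isClosed_Ks B Hs n).completeSpace_coe
  B - ((Ks B Hs n).subtypeL.comp (((Ks B Hs n).orthogonalProjectionOnto).comp B))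

theorem Top_apply (B : K →L[ℂ] K) (Hs : Submodule ℂ K) (n : ℕ) (x : K) :
    haveI : CompleteSpace (Ks B Hs n) := (isClosed_Ks B Hs n).completeSpace_coe
    Top B Hs n x = B x - ((Ks B Hs n).orthogonalProjectionOnto (B x) : K) := rfl

theorem Top_mem_orth (B : K →L[ℂ] K) (Hs : Submodule ℂ K) (n : ℕ) (x : K) :
    Top B Hs n x ∈ (Ks B Hs n)ᗮ := by
  haveI : CompleteSpace (Ks B Hs n) := (isClosed_Ks B Hs n).completeSpace_coe
  rw [Top_apply]
  exact (Ks B Hs n).sub_starProjection_mem_orthogonal (B x)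

theorem mapB_le (B : K →L[ℂ] K) (Hs : Submodule ℂ K) (hHs : IsClosed (Hs : Set K)) (n : ℕ) :
    Submodule.map (B : K →ₗ[ℂ] K) (Ks B Hs n) ≤ Ks B Hs n ⊔ Submodule.map (Top B Hs n : K →ₗ[ℂ] K) (Hseq B Hs n) := by
  haveI : CompleteSpace (Ks B Hs n) := (isClosed_Ks B Hs n).completeSpace_coe
  have key : ∀ b ∈ Hseq B Hs n,
      B b ∈ Ks B Hs n ⊔ Submodule.map (Top B Hs n : K →ₗ[ℂ] K) (Hseq B Hs n) := by
    intro b hb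
    have : B b = Top B Hs n b + ((Ks B Hs n).orthogonalProjectionOnto (B b) : K) := by
      rw [Top_apply]; abel
    rw [this]
    exact Submodule.add_mem _
      (Submodule.mem_sup_right ⟨b, hb, rfl⟩)
      (Submodule.mem_sup_left ((Ks B Hs n).orthogonalProjectionOnto (B b)).2)
  rintro _ ⟨z, hz, rfl⟩
  cases n with
  | zero =>
    have hzH : z ∈ Hseq B Hs 0 := by rwa [← Ks_zero B Hs hHs]
    exact key z hzH
  | succ m =>
    rcases Submodule.mem_sup.mp (Ks_decomp B Hs m hz) with ⟨a, ha, b, hb, rfl⟩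
    have hBa : B a ∈ Ks B Hs (m + 1) := mapB_Ks_le B Hs m ⟨a, ha, rfl⟩
    rw [map_add]
    exact Submodule.add_mem _ (Submodule.mem_sup_left hBa) (key b hb)

theorem Ks_succ_le (B : K →L[ℂ] K) (Hs : Submodule ℂ K) (hHs : IsClosed (Hs : Set K)) (n : ℕ) :
    Ks B Hs (n + 1) ≤
      (Ks B Hs n ⊔ Submodule.map (Top B Hs n : K →ₗ[ℂ] K) (Hseq B Hs n)).topologicalClosure := by
  refine Submodule.topologicalClosure_mono (iSup_le fun k => ?_)
  rcases Nat.lt_succ_iff_lt_or_eq.mp k.2 with hk | hk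
  · exact le_trans (map_pow_le_Ks B Hs (Nat.lt_succ_iff.mp hk)) le_sup_left
  · have h1 : Submodule.map ((B ^ (k : ℕ) : K →L[ℂ] K) : K →ₗ[ℂ] K) Hs ≤ Submodule.map (B : K →ₗ[ℂ] K) (Ks B Hs n) := by
      rintro _ ⟨h, hh, rfl⟩
      have : (B ^ (k : ℕ)) h = B ((B ^ n) h) := by
        rw [hk, pow_succ' B n]; simp [ContinuousLinearMap.mul_apply]
      rw [ContinuousLinearMap.coe_coe, this]
      exact ⟨(B ^ n) h, map_pow_le_Ks B Hs le_rfl ⟨h, hh, rfl⟩, rfl⟩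
    exact le_trans h1 (mapB_le B Hs hHs n)

theorem key8 (B : K →L[ℂ] K) (Hs : Submodule ℂ K) (hHs : IsClosed (Hs : Set K)) (n : ℕ) :
    Hseq B Hs (n + 1) ≤ (Submodule.map (Top B Hs n : K →ₗ[ℂ] K) (Hseq B Hs n)).topologicalClosure := by
  haveI : CompleteSpace (Ks B Hs n) := (isClosed_Ks B Hs n).completeSpace_coe
  set P : K →L[ℂ] K :=
    (Ks B Hs n).subtypeL.comp ((Ks B Hs n).orthogonalProjectionOnto) with hP
  set Q : K →L[ℂ] K := ContinuousLinearMap.id ℂ K - P with hQ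
  have hQap : ∀ v : K, Q v = v - ((Ks B Hs n).orthogonalProjectionOnto v : K) := fun v => rfl
  intro w hw
  have hw1 : w ∈ Ks B Hs (n + 1) := hw.1
  have hw2 : w ∈ (Ks B Hs n)ᗮ := hw.2
  have hQw : Q w = w := by
    rw [hQap, Submodule.orthogonalProjectionOnto_apply_of_mem_orthogonal hw2]
    simp
  set M : Submodule ℂ K := Ks B Hs n ⊔ Submodule.map (Top B Hs n : K →ₗ[ℂ] K) (Hseq B Hs n) with hM
  have hwM : w ∈ closure (M : Set K) := by
    have := Ks_succ_le B Hs hHs n hw1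
    rwa [← Submodule.topologicalClosure_coe]
  have himg : Q '' (M : Set K) ⊆ ((Submodule.map (Top B Hs n : K →ₗ[ℂ] K) (Hseq B Hs n) : Submodule ℂ K) :
      Set K) := by
    rintro _ ⟨v, hv, rfl⟩
    rcases Submodule.mem_sup.mp hv with ⟨a, ha, b, hb, rfl⟩
    have hQa : Q a = 0 := by
      rw [hQap, ← Submodule.starProjection_apply, Submodule.starProjection_eq_self_iff.mpr ha]; simp
    rcases hb with ⟨x, hx, rfl⟩
    have hQb : Q (Top B Hs n x) = Top B Hs n x := by
      rw [hQap, Submodule.orthogonalProjectionOnto_apply_of_mem_orthogonal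
        (Top_mem_orth B Hs n x)]
      simp
    rw [map_add, hQa, ContinuousLinearMap.coe_coe, hQb, zero_add]
    exact ⟨x, hx, rfl⟩
  have : Q w ∈ closure (Q '' (M : Set K)) :=
    image_closure_subset_closure_image Q.continuous ⟨w, hwM, rfl⟩
  have : Q w ∈ closure ((Submodule.map (Top B Hs n : K →ₗ[ℂ] K) (Hseq B Hs n) : Submodule ℂ K) : Set K) :=
    closure_mono himg this
  rw [hQw] at this
  rwa [← Submodule.topologicalClosure_coe] at this

end Stmt7Aux

open Stmt7Aux

/-- If `{A n}` (self-adjoint, `A 0 = I`) has a minimal self-adjoint dilation `B` on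
`K ⊇ Hs`, then `K` decomposes as an orthogonal direct sum `⊕ₙ Hₙ` with `H₀ = Hs`,
relative to which `B` is block tridiagonal, with self-adjoint diagonal blocks,
`B_{(n-1)n} = (B_{n(n-1)})*`, and `Hₙ₊₁` the closure of the range of `B_{(n+1)n}`. -/
theorem stmt_7 {K : Type*} [NormedAddCommGroup K] [InnerProductSpace ℂ K] [CompleteSpace K]
    (Hs : Submodule ℂ K) [CompleteSpace ↥Hs]
    (A : ℕ → ↥Hs →L[ℂ] ↥Hs) (hA0 : A 0 = 1) (hAsa : ∀ n, IsSelfAdjoint (A n))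
    (B : K →L[ℂ] K) (hB : IsSelfAdjoint B)
    (hdil : ∀ (n : ℕ) (h : ↥Hs), A n h = Hs.orthogonalProjectionOnto ((B ^ n) (h : K)))
    (hmin : (⨆ n : ℕ, Submodule.map ((B ^ n : K →L[ℂ] K) : K →ₗ[ℂ] K) Hs).topologicalClosure = ⊤) :
    ∃ Hn : ℕ → Submodule ℂ K,
      Hn 0 = Hs ∧
      (∀ n, IsClosed ((Hn n : Set K))) ∧
      (∀ i j : ℕ, i ≠ j → ∀ x ∈ Hn i, ∀ y ∈ Hn j, (inner ℂ x y : ℂ) = 0) ∧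
      (⨆ n : ℕ, Hn n).topologicalClosure = ⊤ ∧
      (∀ i j : ℕ, j + 1 < i ∨ i + 1 < j → ∀ x ∈ Hn j, ∀ y ∈ Hn i,
        (inner ℂ y (B x) : ℂ) = 0) ∧
      (∀ n : ℕ, ∀ x ∈ Hn n, ∀ y ∈ Hn n, (inner ℂ x (B y) : ℂ) = inner ℂ (B x) y) ∧
      (∀ n : ℕ, ∀ x ∈ Hn n, ∀ y ∈ Hn (n + 1), (inner ℂ x (B y) : ℂ) = inner ℂ (B x) y) ∧
      (∀ n : ℕ, Hn (n + 1) =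
        (Submodule.span ℂ {y : K | y ∈ Hn (n + 1) ∧
          ∃ x ∈ Hn n, B x - y ∈ (Hn (n + 1))ᗮ}).topologicalClosure) := by
  have hHs : IsClosed (Hs : Set K) := (completeSpace_coe_iff_isComplete.mp ‹_›).isClosed
  have hsym : (B : K →ₗ[ℂ] K).IsSymmetric :=
    ContinuousLinearMap.isSelfAdjoint_iff_isSymmetric.mp hB
  have hsym' : ∀ x y : K, (inner ℂ (B x) y : ℂ) = inner ℂ x (B y) := fun x y => hsym.apply_clm x y
  refine ⟨Hseq B Hs, rfl, ?_, ?_, ?_, ?_, ?_, ?_, ?_⟩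
  -- closedness
  · intro n
    cases n with
    | zero => exact hHs
    | succ m =>
      have : ((Hseq B Hs (m + 1) : Submodule ℂ K) : Set K) =
          (Ks B Hs (m + 1) : Set K) ∩ ((Ks B Hs m)ᗮ : Set K) := rfl
      rw [this]
      exact (isClosed_Ks B Hs (m + 1)).inter (Ks B Hs m).isClosed_orthogonal
  -- pairwise orthogonality
  · have horth : ∀ i j : ℕ, i < j → ∀ x ∈ Hseq B Hs i, ∀ y ∈ Hseq B Hs j,
        (inner ℂ x y : ℂ) = 0 := by
      intro i j hij x hx y hy
      obtain ⟨m, rfl⟩ : ∃ m, j = m + 1 := ⟨j - 1, by omega⟩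
      have hxK : x ∈ Ks B Hs m :=
        Ks_mono B Hs (by omega) (Hseq_le_Ks B Hs i hx)
      exact (Submodule.mem_orthogonal _ y).mp (Hseq_succ_le_orth B Hs m hy) x hxK
    intro i j hij x hx y hy
    rcases lt_or_gt_of_ne hij with h | h
    · exact horth i j h x hx y hy
    · rw [← inner_conj_symm, horth j i h y hy x hx, map_zero]
  -- density
  · have hK : ∀ n, Ks B Hs n ≤ ⨆ m, Hseq B Hs m := by
      intro n
      induction n with
      | zero =>
        rw [Ks_zero B Hs hHs]
        exact le_iSup (Hseq B Hs) 0
      | succ m ih =>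
        refine le_trans (Ks_decomp B Hs m) (sup_le ih (le_iSup (Hseq B Hs) (m + 1)))
    have h1 : (⨆ n : ℕ, Submodule.map ((B ^ n : K →L[ℂ] K) : K →ₗ[ℂ] K) Hs) ≤ ⨆ m, Hseq B Hs m :=
      iSup_le fun n => le_trans (map_pow_le_Ks B Hs le_rfl) (hK n)
    exact le_antisymm le_top (hmin ▸ Submodule.topologicalClosure_mono h1)
  -- tridiagonality
  · intro i j hij x hx y hy
    rcases hij with h | h
    · obtain ⟨m, rfl⟩ : ∃ m, i = m + 1 := ⟨i - 1, by omega⟩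
      have hBx : B x ∈ Ks B Hs m := by
        refine Ks_mono B Hs (by omega) (mapB_Ks_le B Hs j ⟨x, Hseq_le_Ks B Hs j hx, rfl⟩)
      have : (inner ℂ (B x) y : ℂ) = 0 :=
        (Submodule.mem_orthogonal _ y).mp (Hseq_succ_le_orth B Hs m hy) _ hBx
      rw [← inner_conj_symm, this, map_zero]
    · obtain ⟨m, rfl⟩ : ∃ m, j = m + 1 := ⟨j - 1, by omega⟩
      have hBy : B y ∈ Ks B Hs m := by
        refine Ks_mono B Hs (by omega) (mapB_Ks_le B Hs i ⟨y, Hseq_le_Ks B Hs i hy, rfl⟩)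
      rw [← hsym' y x]
      exact (Submodule.mem_orthogonal _ x).mp (Hseq_succ_le_orth B Hs m hx) _ hBy
  -- symmetric diagonal blocks
  · exact fun n x _ y _ => (hsym' x y).symm
  -- adjoint relation between off-diagonal blocks
  · exact fun n x _ y _ => (hsym' x y).symm
  -- Hₙ₊₁ is generated by the compressions of B from Hₙ
  · intro n
    haveI : CompleteSpace (Ks B Hs n) := (isClosed_Ks B Hs n).completeSpace_coe
    have hclosed : IsClosed ((Hseq B Hs (n + 1) : Submodule ℂ K) : Set K) :=
      (isClosed_Ks B Hs (n + 1)).inter (Ks B Hs n).isClosed_orthogonal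
    apply le_antisymm
    · refine le_trans (key8 B Hs hHs n) (Submodule.topologicalClosure_mono ?_)
      rw [Submodule.map_le_iff_le_comap]
      intro x hx
      refine Submodule.subset_span ?_
      have hTx1 : Top B Hs n x ∈ Hseq B Hs (n + 1) := by
        constructor
        · rw [Top_apply]
          exact Submodule.sub_mem _
            (mapB_Ks_le B Hs n ⟨x, Hseq_le_Ks B Hs n hx, rfl⟩)
            (Ks_mono B Hs (Nat.le_succ n)
              ((Ks B Hs n).orthogonalProjectionOnto (B x)).2)
        · exact Top_mem_orth B Hs n x
      refine ⟨hTx1, x, hx, ?_⟩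
      have hdiff : B x - Top B Hs n x = ((Ks B Hs n).orthogonalProjectionOnto (B x) : K) := by
        rw [Top_apply]; abel
      rw [ContinuousLinearMap.coe_coe, hdiff]
      rw [Submodule.mem_orthogonal]
      intro w hw
      exact (Submodule.mem_orthogonal' _ w).mp (Hseq_succ_le_orth B Hs n hw) _
        ((Ks B Hs n).orthogonalProjectionOnto (B x)).2
    · refine Submodule.topologicalClosure_minimal _ ?_ hclosed
      rw [Submodule.span_le]
      exact fun y hy => hy.1
end

section
/- Let T be a bounded self-adjoint operator on a Hilbert space H. Define A_0 = I, A_n = 2^{(n-2)/2} T^n if n ≥ 2 is even, and A_n = 0 if n is odd. Then the operator V on H ⊕ H ⊕ H given by the block matrix with rows [0, T, 0], [T, 0, T], [0, T, 0] is a self-adjoint dilation of {A_n}: V is self-adjoint and A_n = P_{H₁} V^n |_{H₁} for all n ≥ 0, where H₁ is the first coordinate copy of H. -/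
open ContinuousLinearMap

set_option maxHeartbeats 1000000
set_option synthInstance.maxHeartbeats 400000

/-- For a self-adjoint `T`, with `A 0 = I`, `A n = 2^{(n-2)/2} Tⁿ` for even `n ≥ 2` and
`A n = 0` for odd `n`, the block operator `V = [[0,T,0],[T,0,T],[0,T,0]]` on `H ⊕ H ⊕ H`
is a self-adjoint dilation of `{A n}` with respect to the first coordinate copy of `H`. -/
theorem stmt_8 {H : Type*} [NormedAddCommGroup H] [InnerProductSpace ℂ H] [CompleteSpace H]
    (T : H →L[ℂ] H) (hT : IsSelfAdjoint T)
    (A : ℕ → H →L[ℂ] H) (hA0 : A 0 = 1)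
    (hAeven : ∀ m : ℕ, 1 ≤ m → A (2 * m) = ((2 : ℂ) ^ (m - 1)) • T ^ (2 * m))
    (hAodd : ∀ m : ℕ, A (2 * m + 1) = 0)
    (V : WithLp 2 (H × WithLp 2 (H × H)) →L[ℂ] WithLp 2 (H × WithLp 2 (H × H)))
    (hV : ∀ x₀ x₁ x₂ : H,
      V ((WithLp.equiv 2 (H × WithLp 2 (H × H))).symm
          (x₀, (WithLp.equiv 2 (H × H)).symm (x₁, x₂))) =
        (WithLp.equiv 2 (H × WithLp 2 (H × H))).symm
          (T x₁, (WithLp.equiv 2 (H × H)).symm (T x₀ + T x₂, T x₁))) :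
    IsSelfAdjoint V ∧
      ∀ (n : ℕ) (h : H),
        ((WithLp.equiv 2 (H × WithLp 2 (H × H)))
            ((V ^ n) ((WithLp.equiv 2 (H × WithLp 2 (H × H))).symm
              (h, (WithLp.equiv 2 (H × H)).symm (0, 0))))).1 = A n h := by
  set e := (WithLp.equiv 2 (H × WithLp 2 (H × H))).symm with he
  set f := (WithLp.equiv 2 (H × H)).symm with hf
  have hsym : ∀ x y : H, inner ℂ (T x) y = (inner ℂ x (T y) : ℂ) :=
    (isSelfAdjoint_iff_isSymmetric.mp hT)
  -- `T` applied to `c • Tⁿ h`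
  have hT2 : ∀ (c : ℂ) (n : ℕ) (a : H), T (c • (T ^ n) a) = c • (T ^ (n + 1)) a := by
    intro c n a
    rw [map_smul, pow_succ', ContinuousLinearMap.mul_apply]
  constructor
  · rw [isSelfAdjoint_iff_isSymmetric]
    intro x y
    have hVx : V x = e (T x.snd.fst, f (T x.fst + T x.snd.snd, T x.snd.fst)) := hV x.fst x.snd.fst x.snd.snd
    have hVy : V y = e (T y.snd.fst, f (T y.fst + T y.snd.snd, T y.snd.fst)) := hV y.fst y.snd.fst y.snd.snd
    simp only [ContinuousLinearMap.coe_coe]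
    rw [hVx, hVy]
    have hx : x = e (x.fst, f (x.snd.fst, x.snd.snd)) := rfl
    have hy : y = e (y.fst, f (y.snd.fst, y.snd.snd)) := rfl
    rw [hx, hy]
    simp only [WithLp.prod_inner_apply, WithLp.equiv_symm_apply, WithLp.ofLp_toLp, WithLp.toLp_fst, WithLp.toLp_snd,
      he, hf, inner_add_left, inner_add_right, hsym]
    ring
  · have step : ∀ (n : ℕ) (x : WithLp 2 (H × WithLp 2 (H × H))),
        (V ^ (n + 1)) x = V ((V ^ n) x) := by
      intro n x; rw [pow_succ']; rfl
    have hodd : ∀ (m : ℕ) (h : H),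
        (V ^ (2 * m + 1)) (e (h, f (0, 0))) =
          e (0, f (((2 : ℂ) ^ m) • (T ^ (2 * m + 1)) h, 0)) := by
      intro m
      induction m with
      | zero =>
        intro h
        rw [pow_one, hV]
        simp
      | succ k ih =>
        intro h
        have h1 : 2 * (k + 1) + 1 = (2 * k + 1) + 1 + 1 := by ring
        rw [h1, step, step, ih, hV]
        rw [show T (0 : H) + T 0 = 0 by simp, hV]
        set a : H := ((2 : ℂ) ^ k) • (T ^ (2 * k + 1)) h with ha
        have key : T (T a) + T (T a) = ((2 : ℂ) ^ (k + 1)) • (T ^ ((2 * k + 1) + 1 + 1)) h := by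
          rw [ha, hT2, hT2, ← two_smul ℂ, smul_smul,
            show (2 : ℂ) * (2 : ℂ) ^ k = (2 : ℂ) ^ (k + 1) by ring]
        rw [key, map_zero]
    have heven : ∀ (k : ℕ) (h : H),
        (V ^ (2 * (k + 1))) (e (h, f (0, 0))) =
          e (((2 : ℂ) ^ k) • (T ^ (2 * (k + 1))) h,
            f (0, ((2 : ℂ) ^ k) • (T ^ (2 * (k + 1))) h)) := by
      intro k h
      have h1 : 2 * (k + 1) = (2 * k + 1) + 1 := by ring
      rw [h1, step, hodd, hV]
      rw [hT2, show T (0 : H) + T 0 = 0 by simp]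
    intro n h
    rcases Nat.even_or_odd n with ⟨m, hm⟩ | ⟨m, hm⟩
    · rcases Nat.eq_zero_or_pos m with rfl | hmpos
      · simp only [show n = 0 by omega, pow_zero, hA0]
        rfl
      · obtain ⟨k, rfl⟩ := Nat.exists_eq_add_of_le hmpos
        rw [show n = 2 * (k + 1) by omega, heven, hAeven (k + 1) (by omega)]
        simp only [Nat.add_sub_cancel]
        rfl
    · rw [show n = 2 * m + 1 by omega, hodd, hAodd]
      rfl
end

section
/- Let T be a bounded quasinormal operator on a Hilbert space H (i.e., T(T*T) = (T*T)T). Define A_0 = I, A_n = 2^{(n-2)/2} T^{*n/2} T^{n/2} for even n ≥ 2, and A_n = 0 for odd n. Then the operator V on H ⊕ H ⊕ H given by the block matrix with rows [0, T*, 0], [T, 0, T*], [0, T, 0] is a self-adjoint dilation of {A_n}: V = V* and A_n = P_{H₁} V^n|_{H₁} for all n ≥ 0. -/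
open ContinuousLinearMap

set_option maxHeartbeats 1000000
set_option synthInstance.maxHeartbeats 400000

/-- Quasinormal operators satisfy `(T*T)^k = T*^k T^k`. -/
theorem quasi_pow_aux {H : Type*} [NormedAddCommGroup H] [InnerProductSpace ℂ H]
    [CompleteSpace H] (T : H →L[ℂ] H) (hT : T * (adjoint T * T) = (adjoint T * T) * T)
    (k : ℕ) : (adjoint T) ^ k * T ^ k = (adjoint T * T) ^ k := by
  induction k with
  | zero => simp
  | succ k ih =>
    have hc0 : Commute T (adjoint T * T) := hT
    have hc : T * (adjoint T * T) ^ k = (adjoint T * T) ^ k * T := hc0.pow_right k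
    calc (adjoint T) ^ (k + 1) * T ^ (k + 1)
        = adjoint T * (((adjoint T) ^ k * T ^ k) * T) := by
          rw [pow_succ' (adjoint T), pow_succ T]; simp [mul_assoc]
      _ = adjoint T * ((adjoint T * T) ^ k * T) := by rw [ih]
      _ = adjoint T * (T * (adjoint T * T) ^ k) := by rw [hc]
      _ = (adjoint T * T) ^ (k + 1) := by rw [pow_succ' (adjoint T * T), mul_assoc]

/-- Quasinormal operators satisfy `T (T*^k T^k) = T*^k T^(k+1)`. -/
theorem quasi_key_aux {H : Type*} [NormedAddCommGroup H] [InnerProductSpace ℂ H]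
    [CompleteSpace H] (T : H →L[ℂ] H) (hT : T * (adjoint T * T) = (adjoint T * T) * T)
    (k : ℕ) : T * ((adjoint T) ^ k * T ^ k) = (adjoint T) ^ k * T ^ (k + 1) := by
  have hc0 : Commute T (adjoint T * T) := hT
  have hc : T * (adjoint T * T) ^ k = (adjoint T * T) ^ k * T := hc0.pow_right k
  rw [quasi_pow_aux T hT k, hc, ← quasi_pow_aux T hT k, mul_assoc, ← pow_succ]

/-- `T (T*^k T^(k+j)) = T*^k T^(k+j+1)` for quasinormal `T`. -/
theorem quasi_key_aux' {H : Type*} [NormedAddCommGroup H] [InnerProductSpace ℂ H]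
    [CompleteSpace H] (T : H →L[ℂ] H) (hT : T * (adjoint T * T) = (adjoint T * T) * T)
    (k j : ℕ) (hkj : k ≤ j) :
    T * ((adjoint T) ^ k * T ^ j) = (adjoint T) ^ k * T ^ (j + 1) := by
  obtain ⟨i, rfl⟩ := Nat.exists_eq_add_of_le hkj
  have h1 : (adjoint T) ^ k * T ^ (k + i) = ((adjoint T) ^ k * T ^ k) * T ^ i := by
    rw [mul_assoc, ← pow_add]
  rw [h1, ← mul_assoc, quasi_key_aux T hT k, mul_assoc, ← pow_add]
  congr 1
  ring

/-- For a quasinormal `T` (i.e. `T(T*T) = (T*T)T`), with `A 0 = I`,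
`A n = 2^{(n-2)/2} T*^{n/2} T^{n/2}` for even `n ≥ 2` and `A n = 0` for odd `n`, the
block operator `V = [[0,T*,0],[T,0,T*],[0,T,0]]` on `H ⊕ H ⊕ H` is a self-adjoint
dilation of `{A n}` with respect to the first coordinate copy of `H`. -/
theorem stmt_9 {H : Type*} [NormedAddCommGroup H] [InnerProductSpace ℂ H] [CompleteSpace H]
    (T : H →L[ℂ] H) (hT : T * (adjoint T * T) = (adjoint T * T) * T)
    (A : ℕ → H →L[ℂ] H) (hA0 : A 0 = 1)
    (hAeven : ∀ m : ℕ, 1 ≤ m → A (2 * m) = ((2 : ℂ) ^ (m - 1)) • ((adjoint T) ^ m * T ^ m))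
    (hAodd : ∀ m : ℕ, A (2 * m + 1) = 0)
    (V : WithLp 2 (H × WithLp 2 (H × H)) →L[ℂ] WithLp 2 (H × WithLp 2 (H × H)))
    (hV : ∀ x₀ x₁ x₂ : H,
      V ((WithLp.equiv 2 (H × WithLp 2 (H × H))).symm
          (x₀, (WithLp.equiv 2 (H × H)).symm (x₁, x₂))) =
        (WithLp.equiv 2 (H × WithLp 2 (H × H))).symm
          (adjoint T x₁, (WithLp.equiv 2 (H × H)).symm (T x₀ + adjoint T x₂, T x₁))) :
    IsSelfAdjoint V ∧
      ∀ (n : ℕ) (h : H),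
        ((WithLp.equiv 2 (H × WithLp 2 (H × H)))
            ((V ^ n) ((WithLp.equiv 2 (H × WithLp 2 (H × H))).symm
              (h, (WithLp.equiv 2 (H × H)).symm (0, 0))))).1 = A n h := by
  set e := WithLp.equiv 2 (H × WithLp 2 (H × H)) with he
  set e2 := WithLp.equiv 2 (H × H) with he2
  constructor
  · rw [ContinuousLinearMap.isSelfAdjoint_iff_isSymmetric]
    intro x y
    have hx : x = e.symm ((e x).1, e2.symm ((e2 (e x).2).1, (e2 (e x).2).2)) := rfl
    have hy : y = e.symm ((e y).1, e2.symm ((e2 (e y).2).1, (e2 (e y).2).2)) := rfl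
    rw [hx, hy]
    simp only [ContinuousLinearMap.coe_coe, hV]
    simp only [he, he2, WithLp.prod_inner_apply, WithLp.equiv_symm_apply, WithLp.ofLp_toLp, WithLp.toLp_fst, WithLp.toLp_snd,
      inner_add_left, inner_add_right, adjoint_inner_left, adjoint_inner_right]
    ring
  · have key : ∀ (m : ℕ) (h : H),
        (V ^ (2 * m + 1)) (e.symm (h, e2.symm (0, 0))) =
          e.symm (0, e2.symm ((2 : ℂ) ^ m • (((adjoint T) ^ m * T ^ (m + 1)) h), 0)) ∧
        (V ^ (2 * m + 2)) (e.symm (h, e2.symm (0, 0))) =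
          e.symm ((2 : ℂ) ^ m • (((adjoint T) ^ (m + 1) * T ^ (m + 1)) h),
            e2.symm (0, (2 : ℂ) ^ m • (((adjoint T) ^ m * T ^ (m + 2)) h))) := by
      intro m
      induction m with
      | zero =>
        intro h
        constructor
        · rw [show 2 * 0 + 1 = 1 by norm_num, pow_one, hV]
          simp
        · rw [show 2 * 0 + 2 = 1 + 1 by norm_num, pow_succ', pow_one, mul_apply_eq_comp, hV]
          simp only [map_zero, add_zero, hV]
          simp [mul_apply_eq_comp, pow_succ]
        | succ k ih =>
        intro h
        have ih2 := (ih h).2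
        have hmid : (V ^ (2 * (k + 1) + 1)) (e.symm (h, e2.symm (0, 0))) =
            e.symm (0, e2.symm ((2 : ℂ) ^ (k + 1) •
              (((adjoint T) ^ (k + 1) * T ^ (k + 2)) h), 0)) := by
          rw [show 2 * (k + 1) + 1 = (2 * k + 2) + 1 by ring, pow_succ', mul_apply_eq_comp, ih2, hV]
          simp only [map_zero, map_smul, add_zero]
          simp only [EmbeddingLike.apply_eq_iff_eq, Prod.mk.injEq]
          refine ⟨trivial, ?_, trivial⟩
          rw [← mul_apply_eq_comp, ← mul_apply_eq_comp, quasi_key_aux T hT (k + 1),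
            show adjoint T * ((adjoint T) ^ k * T ^ (k + 2)) =
              (adjoint T) ^ (k + 1) * T ^ (k + 2) by rw [← mul_assoc, ← pow_succ'],
            ← add_smul]
          congr 1
          rw [pow_succ]; ring
        refine ⟨hmid, ?_⟩
        rw [show 2 * (k + 1) + 2 = (2 * (k + 1) + 1) + 1 by ring, pow_succ', mul_apply_eq_comp, hmid, hV]
        simp only [map_zero, map_smul, add_zero, zero_add]
        simp only [EmbeddingLike.apply_eq_iff_eq, Prod.mk.injEq]
        refine ⟨?_, trivial, ?_⟩
        · rw [← mul_apply_eq_comp, ← mul_assoc, ← pow_succ']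
        · rw [← mul_apply_eq_comp, quasi_key_aux' T hT (k + 1) (k + 2) (by omega)]
    intro n h
    rcases Nat.even_or_odd n with ⟨m, hm⟩ | ⟨m, hm⟩
    · rcases m with _ | k
      · subst hm
        simp [hA0]
      · have hn : n = 2 * (k + 1) := by omega
        subst hn
        have h2 := (key k h).2
        rw [show 2 * k + 2 = 2 * (k + 1) by ring] at h2
        rw [h2, hAeven (k + 1) (by omega)]
        simp [Equiv.apply_symm_apply]
    · have hn : n = 2 * m + 1 := by omega
      subst hn
      rw [(key m h).1, hAodd m]
      simp [Equiv.apply_symm_apply]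
end

section
/- Let U be a unitary on a Hilbert space K and H ⊆ K a closed subspace. Then for every z in the open unit disk, the operator P_H((I - zU*)^{-1} + (I - z̄U)^{-1} - I)|_H is a positive bounded operator on H; equivalently (I - zU*)^{-1} + (I - z̄U)^{-1} - I = (1 - |z|²)(I - z̄U)^{-1}((I - z̄U)^{-1})* ≥ 0. -/
open ContinuousLinearMap

set_option maxHeartbeats 1000000
set_option synthInstance.maxHeartbeats 400000

private lemma aux_smul_pos {K : Type*} [NormedAddCommGroup K] [InnerProductSpace ℂ K]
    [CompleteSpace K] {T : K →L[ℂ] K} (hT : T.IsPositive) {c : ℝ} (hc : 0 ≤ c) :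
    ((c : ℂ) • T).IsPositive := by
  constructor
  · have h1 : IsSelfAdjoint ((c:ℂ)) := by
      rw [IsSelfAdjoint, Complex.star_def, Complex.conj_ofReal]
    exact LinearMap.IsSymmetric.smul h1 hT.1
  · intro x
    have h := hT.2 x
    simp only [reApplyInnerSelf, smul_apply, inner_smul_left, Complex.conj_ofReal] at h ⊢
    rw [RCLike.re_to_complex, Complex.re_ofReal_mul]
    exact mul_nonneg hc h

/-- For a unitary `U` on `K`, a closed subspace `H ⊆ K` (given by an isometric embedding
`ι`) and `|z| < 1`, writing `Y = (I - zU*)⁻¹` and `X = (I - z̄U)⁻¹`, one has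
`Y + X - I = (1 - |z|²) X X* ≥ 0`, and the compression of `Y + X - I` to `H` is
positive. -/
theorem stmt_12 {H : Type*} [NormedAddCommGroup H] [InnerProductSpace ℂ H] [CompleteSpace H]
    {K : Type*} [NormedAddCommGroup K] [InnerProductSpace ℂ K] [CompleteSpace K]
    (ι : H →ₗᵢ[ℂ] K) (U : K →L[ℂ] K)
    (hU : adjoint U * U = 1 ∧ U * adjoint U = 1)
    (z : ℂ) (hz : ‖z‖ < 1)
    (X : K →L[ℂ] K)
    (hX : X * (1 - (starRingEnd ℂ z) • U) = 1 ∧ (1 - (starRingEnd ℂ z) • U) * X = 1)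
    (Y : K →L[ℂ] K)
    (hY : Y * (1 - z • adjoint U) = 1 ∧ (1 - z • adjoint U) * Y = 1) :
    Y + X - 1 = ((1 : ℂ) - (‖z‖ : ℂ) ^ 2) • (X * adjoint X) ∧
    (Y + X - 1).IsPositive ∧
    (adjoint ι.toContinuousLinearMap ∘L (Y + X - 1) ∘L
      ι.toContinuousLinearMap).IsPositive := by
  set A := 1 - (starRingEnd ℂ z) • U with hA
  set B := 1 - z • adjoint U with hB
  -- adjoint of A is B
  have hadjA : adjoint A = B := by
    rw [hA, hB, ← star_eq_adjoint, ← star_eq_adjoint, star_sub, star_one, star_smul]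
    simp
  -- B * adjoint X = 1 and adjoint X * B = 1
  have h1 : B * adjoint X = 1 := by
    have := congrArg adjoint hX.1
    rwa [← star_eq_adjoint (X * A), star_mul, star_eq_adjoint, star_eq_adjoint, hadjA,
      ← star_eq_adjoint (1 : K →L[ℂ] K), star_one] at this
  have h2 : adjoint X * B = 1 := by
    have := congrArg adjoint hX.2
    rwa [← star_eq_adjoint (A * X), star_mul, star_eq_adjoint, star_eq_adjoint, hadjA,
      ← star_eq_adjoint (1 : K →L[ℂ] K), star_one] at this
  -- Y = adjoint X
  have hYX : Y = adjoint X := by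
    calc Y = Y * (B * adjoint X) := by rw [h1, mul_one]
      _ = (Y * B) * adjoint X := by rw [mul_assoc]
      _ = adjoint X := by rw [hY.1, one_mul]
  -- the scalar identity
  have hzz : (starRingEnd ℂ z) * z = ((‖z‖ : ℂ))^2 := by
    rw [mul_comm, Complex.mul_conj]
    norm_cast
    simp [Complex.normSq_eq_norm_sq]
  have hABscalar : A + B - A * B = ((1 : ℂ) - (‖z‖ : ℂ) ^ 2) • (1 : K →L[ℂ] K) := by
    have expand : A * B
        = 1 - z • adjoint U - (starRingEnd ℂ z) • U
          + ((starRingEnd ℂ z) * z) • (U * adjoint U) := by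
      rw [hA, hB]
      simp only [mul_sub, sub_mul, one_mul, mul_one, smul_mul_smul_comm]
      abel
    rw [expand, hU.2, hzz, hA, hB, sub_smul, one_smul]
    ext x
    simp
    abel
  -- the main identity
  have hmain : Y + X - 1 = ((1 : ℂ) - (‖z‖ : ℂ) ^ 2) • (X * adjoint X) := by
    have ha1 : X * A * Y = Y := by rw [hX.1, one_mul]
    have ha2 : X * B * Y = X := by rw [mul_assoc, hY.2, mul_one]
    have ha3 : X * (A * B) * Y = 1 := by
      rw [← mul_assoc X A B, mul_assoc (X * A) B Y, hX.1, hY.2, one_mul]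
    have key : X * (A + B - A * B) * Y = Y + X - 1 := by
      simp only [mul_add, mul_sub, add_mul, sub_mul]
      rw [ha1, ha2, ha3]
    rw [← key, hABscalar, hYX]
    rw [mul_smul_comm, smul_mul_assoc, mul_one]
  have hc : (0:ℝ) ≤ 1 - ‖z‖^2 := by nlinarith [norm_nonneg z]
  have hXXpos : (X * adjoint X).IsPositive := by
    have := (isPositive_one (E := K) (𝕜 := ℂ)).conj_adjoint X
    simpa [mul_def, one_def] using this
  have hcongr : ((1 : ℂ) - (‖z‖ : ℂ) ^ 2) • (X * adjoint X)
      = (((1 - ‖z‖^2 : ℝ) : ℂ)) • (X * adjoint X) := by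
    push_cast
    ring_nf
  have hpos : (Y + X - 1).IsPositive := by
    rw [hmain, hcongr]
    exact aux_smul_pos hXXpos hc
  exact ⟨hmain, hpos, hpos.adjoint_conj ι.toContinuousLinearMap⟩
end

section
/- Suppose U is a unitary on a Hilbert space K and H ⊆ K a closed subspace such that K is the closed span of {U^n h : h ∈ H, n ∈ ℤ}. Let K_+ be the closed span of {U^n h : h ∈ H, n ≥ 0} and K_- = K_+^⊥. Then U*(K_-) ⊆ K_-, and ∩_{n≥0} U*^n(K_-) = {0}; consequently U* restricted to K_- is a unilateral shift with wandering subspace H_{-1} = K_- ⊖ U*(K_-), and U(H_{-1}) ⊆ K_+. -/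
open ContinuousLinearMap

set_option maxHeartbeats 1000000
set_option synthInstance.maxHeartbeats 400000

/-- Wold-type decomposition: if `U` is unitary on `K` and `Hs` a subspace with
`K = closed span {Uⁿ h : n ∈ ℤ}`, then with `K₊ = closed span {Uⁿ h : n ≥ 0}` and
`K₋ = K₊ᗮ`: `U*` leaves `K₋` invariant, `∩ₙ U*ⁿ(K₋) = {0}`, `U*|_{K₋}` is a unilateral
shift with wandering subspace `H₋₁ = K₋ ⊖ U*(K₋)` (so `K₋ = ⊕ₙ U*ⁿ(H₋₁)`), and
`U(H₋₁) ⊆ K₊`. -/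
theorem stmt_13 {K : Type*} [NormedAddCommGroup K] [InnerProductSpace ℂ K] [CompleteSpace K]
    (U : K →L[ℂ] K) (hU : adjoint U * U = 1 ∧ U * adjoint U = 1)
    (Hs : Submodule ℂ K) (hHs : IsClosed (Hs : Set K))
    (hgen : ((⨆ n : ℕ, Submodule.map (↑(U ^ n) : K →ₗ[ℂ] K) Hs) ⊔
        (⨆ n : ℕ, Submodule.map (↑((adjoint U) ^ n) : K →ₗ[ℂ] K) Hs)).topologicalClosure = ⊤) :
    let Kp := (⨆ n : ℕ, Submodule.map (↑(U ^ n) : K →ₗ[ℂ] K) Hs).topologicalClosure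
    let Km := Kpᗮ
    let W := Km ⊓ (Submodule.map (↑(adjoint U) : K →ₗ[ℂ] K) Km)ᗮ
    (∀ x ∈ Km, adjoint U x ∈ Km) ∧
    (∀ x : K, (∀ n : ℕ, x ∈ Submodule.map (↑((adjoint U) ^ n) : K →ₗ[ℂ] K) Km) → x = 0) ∧
    Km = (⨆ n : ℕ, Submodule.map (↑((adjoint U) ^ n) : K →ₗ[ℂ] K) W).topologicalClosure ∧
    (∀ m n : ℕ, m ≠ n → ∀ x ∈ W, ∀ y ∈ W,
      (inner ℂ (((adjoint U) ^ m) x) (((adjoint U) ^ n) y) : ℂ) = 0) ∧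
    (∀ x ∈ W, U x ∈ Kp) := by
  obtain ⟨hU1, hU2⟩ := hU
  intro Kp Km W
  set V := adjoint U with hV
  have hVU : ∀ x : K, V (U x) = x := fun x => by
    have := DFunLike.congr_fun hU1 x; simpa [mul_apply] using this
  have hUV : ∀ x : K, U (V x) = x := fun x => by
    have := DFunLike.congr_fun hU2 x; simpa [mul_apply] using this
  -- inner product identities
  have hinnV : ∀ a b : K, (inner ℂ (V a) (V b) : ℂ) = inner ℂ a b := fun a b => by
    rw [hV, adjoint_inner_left, hUV]
  have hinnVn : ∀ (n : ℕ) (a b : K), (inner ℂ ((V ^ n) a) ((V ^ n) b) : ℂ) = inner ℂ a b := by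
    intro n
    induction n with
    | zero => simp
    | succ n ih =>
      intro a b
      rw [pow_succ, mul_apply_eq_comp, mul_apply_eq_comp, ih, hinnV]
  -- Kp is closed and complete
  have hKp_closed : IsClosed (Kp : Set K) := Submodule.isClosed_topologicalClosure _
  haveI : CompleteSpace Kp := hKp_closed.completeSpace_coe
  have hKm_closed : IsClosed (Km : Set K) := Submodule.isClosed_orthogonal _
  have hKmo : Kmᗮ = Kp := Submodule.orthogonal_orthogonal Kp
  -- U maps Kp into Kp
  have hMU : Submodule.map (↑U : K →ₗ[ℂ] K) (⨆ n : ℕ, Submodule.map (↑(U ^ n) : K →ₗ[ℂ] K) Hs) ≤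
      ⨆ n : ℕ, Submodule.map (↑(U ^ n) : K →ₗ[ℂ] K) Hs := by
    rw [Submodule.map_iSup]
    refine iSup_le fun n => ?_
    rintro x ⟨y, ⟨z, hz, rfl⟩, rfl⟩
    exact le_iSup (fun n => Submodule.map (↑(U ^ n) : K →ₗ[ℂ] K) Hs) (n + 1)
      ⟨z, hz, by simp [pow_succ', mul_apply]⟩
  have hKpU : ∀ u ∈ Kp, U u ∈ Kp := by
    intro u hu
    exact map_mem_closure U.continuous hu (fun y hy => hMU ⟨y, hy, rfl⟩)
  -- Hs ≤ Kp
  have hHsKp : Hs ≤ Kp := by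
    refine le_trans ?_ (Submodule.le_topologicalClosure _)
    refine le_trans ?_ (le_iSup (fun n => Submodule.map (↑(U ^ n) : K →ₗ[ℂ] K) Hs) 0)
    intro x hx; exact ⟨x, hx, by simp⟩
  -- Part 1: V maps Km into Km
  have part1 : ∀ x ∈ Km, V x ∈ Km := by
    intro x hx
    rw [Submodule.mem_orthogonal] at hx ⊢
    intro u hu
    rw [hV, adjoint_inner_right]
    exact hx (U u) (hKpU u hu)
  have hVKm : Submodule.map (↑V : K →ₗ[ℂ] K) Km ≤ Km := by
    rintro _ ⟨y, hy, rfl⟩; exact part1 y hy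
  have hVnKm : ∀ n : ℕ, Submodule.map (↑(V ^ n) : K →ₗ[ℂ] K) Km ≤ Km := by
    intro n
    induction n with
    | zero =>
      rintro _ ⟨y, hy, rfl⟩
      simpa using hy
    | succ n ih =>
      rintro _ ⟨y, hy, rfl⟩
      rw [pow_succ, ContinuousLinearMap.coe_coe, mul_apply_eq_comp]
      exact ih ⟨V y, part1 y hy, rfl⟩
  -- Part 2
  have hbot : ((⨆ n : ℕ, Submodule.map (↑(U ^ n) : K →ₗ[ℂ] K) Hs) ⊔
      (⨆ n : ℕ, Submodule.map (↑((adjoint U) ^ n) : K →ₗ[ℂ] K) Hs))ᗮ = ⊥ :=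
    Submodule.topologicalClosure_eq_top_iff.mp hgen
  have part2 : ∀ x : K, (∀ n : ℕ, x ∈ Submodule.map (↑(V ^ n) : K →ₗ[ℂ] K) Km) → x = 0 := by
    intro x hx
    have hx0 : x ∈ Km := by
      have := hx 0; simpa using this
    have hmem : x ∈ ((⨆ n : ℕ, Submodule.map (↑(U ^ n) : K →ₗ[ℂ] K) Hs) ⊔
        (⨆ n : ℕ, Submodule.map (↑((adjoint U) ^ n) : K →ₗ[ℂ] K) Hs))ᗮ := by
      rw [← Submodule.inf_orthogonal]
      constructor
      · rw [← Submodule.iInf_orthogonal]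
        refine Submodule.mem_iInf _ |>.mpr fun n => ?_
        rw [Submodule.mem_orthogonal]
        rintro _ ⟨h, hh, rfl⟩
        exact (Submodule.mem_orthogonal _ _).mp hx0 _
          (Submodule.le_topologicalClosure _
            (le_iSup (fun n => Submodule.map (↑(U ^ n) : K →ₗ[ℂ] K) Hs) n ⟨h, hh, rfl⟩))
      · rw [← Submodule.iInf_orthogonal]
        refine Submodule.mem_iInf _ |>.mpr fun n => ?_
        rw [Submodule.mem_orthogonal]
        rintro _ ⟨h, hh, rfl⟩
        obtain ⟨y, hy, rfl⟩ := hx n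
        rw [← hV, ContinuousLinearMap.coe_coe, hinnVn]
        exact (Submodule.mem_orthogonal _ _).mp hy _ (hHsKp hh)
    rw [hbot] at hmem
    simpa using hmem
  -- N := V(Km) is closed
  have hKm_complete : CompleteSpace Km := hKm_closed.completeSpace_coe
  set N := Submodule.map (↑V : K →ₗ[ℂ] K) Km with hN
  have hN_closed : IsClosed (N : Set K) := by
    set e : K ≃L[ℂ] K := ContinuousLinearEquiv.equivOfInverse V U hUV hVU with he
    have hNe : (N : Set K) = e '' (Km : Set K) := by
      ext z
      constructor
      · rintro ⟨y, hy, rfl⟩; exact ⟨y, hy, rfl⟩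
      · rintro ⟨y, hy, rfl⟩; exact ⟨y, hy, rfl⟩
    rw [hNe]
    exact e.toHomeomorph.isClosedMap _ hKm_closed
  haveI : CompleteSpace N := hN_closed.completeSpace_coe
  -- decomposition lemma: y ∈ Km orthogonal to W lies in N
  have hdec : ∀ y ∈ Km, (∀ w ∈ W, (inner ℂ w y : ℂ) = 0) → y ∈ N := by
    intro y hy hyW
    set p : K := (Submodule.orthogonalProjectionOnto N y : K) with hp
    have hpN : p ∈ N := (Submodule.orthogonalProjectionOnto N y).2
    have hrN : y - p ∈ Nᗮ := N.sub_starProjection_mem_orthogonal y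
    have hrKm : y - p ∈ Km := Km.sub_mem hy (hVKm hpN)
    have hrW : y - p ∈ W := ⟨hrKm, hrN⟩
    have h1 : (inner ℂ (y - p) y : ℂ) = 0 := hyW _ hrW
    have h2 : (inner ℂ (y - p) p : ℂ) = 0 := by
      rw [← inner_conj_symm, (Submodule.mem_orthogonal N (y - p)).mp hrN p hpN, map_zero]
    have h3 : (inner ℂ (y - p) (y - p) : ℂ) = 0 := by
      rw [inner_sub_right, h1, h2, sub_zero]
    have h4 : y = p := by
      have := inner_self_eq_zero.mp h3
      rwa [sub_eq_zero] at this
    rw [h4]; exact hpN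
  -- induction claim for part 3
  have hind : ∀ (x : K), x ∈ Km → (∀ (n : ℕ) (w : K), w ∈ W → (inner ℂ ((V ^ n) w) x : ℂ) = 0) →
      ∀ n : ℕ, x ∈ Submodule.map (↑(V ^ n) : K →ₗ[ℂ] K) Km := by
    intro x hxKm hxW n
    induction n with
    | zero => simpa using hxKm
    | succ n ih =>
      obtain ⟨y, hy, rfl⟩ := ih
      have hyW : ∀ w ∈ W, (inner ℂ w y : ℂ) = 0 := by
        intro w hw
        have := hxW n w hw
        rwa [ContinuousLinearMap.coe_coe, hinnVn] at this
      obtain ⟨z, hz, rfl⟩ := hdec y hy hyW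
      exact ⟨z, hz, by rw [pow_succ]; rfl⟩
  -- Part 3
  set M := (⨆ n : ℕ, Submodule.map (↑(V ^ n) : K →ₗ[ℂ] K) W).topologicalClosure with hM
  have hWKm : W ≤ Km := inf_le_left
  have hMle : M ≤ Km := by
    refine Submodule.topologicalClosure_minimal _ (iSup_le fun n => ?_) hKm_closed
    rintro _ ⟨w, hw, rfl⟩
    exact hVnKm n ⟨w, hWKm hw, rfl⟩
  haveI : CompleteSpace M := (Submodule.isClosed_topologicalClosure _).completeSpace_coe
  have part3 : Km = M := by
    refine le_antisymm ?_ hMle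
    intro x hx
    set p : K := (Submodule.orthogonalProjectionOnto M x : K) with hp
    have hpM : p ∈ M := (Submodule.orthogonalProjectionOnto M x).2
    have hrM : x - p ∈ Mᗮ := M.sub_starProjection_mem_orthogonal x
    have hrKm : x - p ∈ Km := Km.sub_mem hx (hMle hpM)
    have hrW : ∀ (n : ℕ) (w : K), w ∈ W → (inner ℂ ((V ^ n) w) (x - p) : ℂ) = 0 := by
      intro n w hw
      exact (Submodule.mem_orthogonal M (x - p)).mp hrM _
        (Submodule.le_topologicalClosure _
          (le_iSup (fun n => Submodule.map (↑(V ^ n) : K →ₗ[ℂ] K) W) n ⟨w, hw, rfl⟩))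
    have h0 : x - p = 0 := part2 _ (hind _ hrKm hrW)
    have : x = p := by rwa [sub_eq_zero] at h0
    rw [this]; exact hpM
  -- Part 4
  have part4 : ∀ m n : ℕ, m ≠ n → ∀ x ∈ W, ∀ y ∈ W,
      (inner ℂ ((V ^ m) x) ((V ^ n) y) : ℂ) = 0 := by
    have key : ∀ m n : ℕ, m < n → ∀ x ∈ W, ∀ y ∈ W,
        (inner ℂ ((V ^ m) x) ((V ^ n) y) : ℂ) = 0 := by
      intro m n hmn x hx y hy
      obtain ⟨hxKm, hxN⟩ := hx
      have hmn' : m + (n - m) = n := by omega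
      have hkey : (V ^ n) y = (V ^ m) ((V ^ (n - m)) y) := by
        rw [← mul_apply_eq_comp, ← pow_add, hmn']
      rw [hkey, hinnVn]
      obtain ⟨k, hk⟩ : ∃ k, n - m = k + 1 := ⟨n - m - 1, by omega⟩
      have h1 : (V ^ (n - m)) y = V ((V ^ k) y) := by
        rw [hk, pow_succ', mul_apply_eq_comp]
      have h2 : (V ^ (n - m)) y ∈ N := by
        rw [h1]
        exact ⟨_, hVnKm k ⟨y, hWKm hy, rfl⟩, rfl⟩
      exact (Submodule.mem_orthogonal' N x).mp hxN _ h2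
    intro m n hmn x hx y hy
    rcases lt_or_gt_of_ne hmn with h | h
    · exact key m n h x hx y hy
    · rw [← inner_conj_symm, key n m h y hy x hx, map_zero]
  -- Part 5
  have part5 : ∀ x ∈ W, U x ∈ Kp := by
    intro x hx
    obtain ⟨hxKm, hxN⟩ := hx
    rw [← hKmo, Submodule.mem_orthogonal]
    intro u hu
    rw [← adjoint_inner_left]
    exact (Submodule.mem_orthogonal N x).mp hxN _ ⟨u, hu, rfl⟩
  exact ⟨part1, part2, part3, part4, part5⟩
end

section
/- Let A, C ∈ B(H) commute with A positive invertible, ‖C‖ ≤ 1, and I + A(A-2I)C*C invertible. Set B = (I + A(A-2I)C*C)^{-1/2}, D = (I - C*C)^{1/2}, D_* = (I - CC*)^{1/2}, T = A B D C (note B, D commute with A). Define R on H ⊕ H as the block matrix with rows [BDC, BDD_*] and [(A-I)CBC, (A-I)CBD_*]. Then for all n ≥ 1, the (0,0) block of R^n equals A^{n-1}(BDC)^n = A^{-1/2} T^n A^{-1/2}. -/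
/-!
`R` factors as `K L` with `K = (BD, (A - 1)CB)ᵀ : H → H ⊕ H` and `L = (C, D_*) : H ⊕ H → H`,
so the `(0,0)` corner of `R^(m+1)` is `BD M^m C` for the transfer operator
`M = LK = CBD + D_*(A - 1)CB`.
A positive square root inherits every commutation and intertwining relation of its square, by
approximating `√` with polynomials on the spectra. Hence `A` commutes with `B, D, D_*`, `B`
commutes with `D`, and the intertwining `(1 - CC*)C = C(1 - C*C)` gives `D_* C = C D`.
Then `M C = C (A X)` with `X = BDC`, so `BD M^m C = X (A X)^m = A^m X^(m+1)`, while `T = A X`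
gives `S T^(m+1) S = A^m X^(m+1)`.
-/

section SemiconjCFC

variable {A : Type*} [Ring A] [StarRing A] [Algebra ℝ A] [TopologicalSpace A]
  [ContinuousFunctionalCalculus ℝ A IsSelfAdjoint] [IsTopologicalRing A] [T2Space A]

theorem SemiconjBy.cfc_real {a x y : A} (h : SemiconjBy a x y) (hx : IsSelfAdjoint x)
    (hy : IsSelfAdjoint y) (f : ℝ → ℝ) (hf : ContinuousOn f (spectrum ℝ x ∪ spectrum ℝ y)) :
    SemiconjBy a (cfc f x) (cfc f y) := by
  set s := spectrum ℝ x ∪ spectrum ℝ y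
  have : CompactSpace s := isCompact_iff_compactSpace.mp
    ((ContinuousFunctionalCalculus.isCompact_spectrum x).union
      (ContinuousFunctionalCalculus.isCompact_spectrum y))
  let ιx : C(spectrum ℝ x, s) := ⟨Set.inclusion Set.subset_union_left, continuous_inclusion _⟩
  let ιy : C(spectrum ℝ y, s) := ⟨Set.inclusion Set.subset_union_right, continuous_inclusion _⟩
  suffices key : ∀ g : C(s, ℝ), SemiconjBy a (cfcHom hx (g.comp ιx)) (cfcHom hy (g.comp ιy)) by
    rw [cfc_apply f x hx (hf.mono Set.subset_union_left),
      cfc_apply f y hy (hf.mono Set.subset_union_right)]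
    exact key ⟨_, hf.domRestrict⟩
  have hid : SemiconjBy a (cfcHom hx ((ContinuousMap.restrict s (.id ℝ)).comp ιx))
      (cfcHom hy ((ContinuousMap.restrict s (.id ℝ)).comp ιy)) := by
    convert h
    · exact cfcHom_id hx
    · exact cfcHom_id hy
  intro g
  induction g using ContinuousMap.induction_on_of_compact with
  | const r =>
    change SemiconjBy a (cfcHom hx (algebraMap ℝ _ r)) (cfcHom hy (algebraMap ℝ _ r))
    rw [AlgHomClass.commutes, AlgHomClass.commutes]
    exact Algebra.commute_algebraMap_right r a
  | id => exact hid
  | star_id => simpa only [star_trivial] using hid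
  | add f g hf hg =>
    simpa only [ContinuousMap.add_comp, map_add] using hf.add_right hg
  | mul f g hf hg =>
    simpa only [ContinuousMap.mul_comp, map_mul] using hf.mul_right hg
  | frequently g hg =>
    have hcont {z : A} (hz : IsSelfAdjoint z) (ι : C(spectrum ℝ z, s)) :
        Continuous fun g : C(s, ℝ) ↦ cfcHom hz (g.comp ι) :=
      (cfcHom_continuous hz).comp (ContinuousMap.continuous_precomp ι)
    exact (isClosed_eq (continuous_const.mul (hcont hx ιx)) ((hcont hy ιy).mul continuous_const)
      ).mem_of_frequently_of_tendsto hg Filter.tendsto_id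

end SemiconjCFC

section Defect

variable {E : Type*} [CStarAlgebra E] [PartialOrder E] [StarOrderedRing E]

theorem SemiconjBy.of_mul_self {a x y : E} (h : SemiconjBy a (x * x) (y * y)) (hx : 0 ≤ x)
    (hy : 0 ≤ y) :
    SemiconjBy a x y := by
  have hx2 := hx.isSelfAdjoint.mul_self_nonneg
  have hy2 := hy.isSelfAdjoint.mul_self_nonneg
  have key := h.cfc_real hx2.isSelfAdjoint hy2.isSelfAdjoint Real.sqrt
    Real.continuous_sqrt.continuousOn
  rwa [← cfcₙ_eq_cfc, ← cfcₙ_eq_cfc, ← CFC.sqrt_eq_real_sqrt _ hx2, ← CFC.sqrt_eq_real_sqrt _ hy2,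
    CFC.sqrt_mul_self x hx, CFC.sqrt_mul_self y hy] at key

theorem Commute.of_mul_self {a x : E} (h : Commute a (x * x)) (hx : 0 ≤ x) : Commute a x :=
  SemiconjBy.of_mul_self h hx hx

theorem Commute.of_inv_mul_self {a w x : E} (h : Commute a w) (hx : 0 ≤ x)
    (hxw : x * x * w = 1) (hwx : w * (x * x) = 1) : Commute a x :=
  (Commute.units_inv_right (u := ⟨w, x * x, hwx, hxw⟩) h).of_mul_self hx

theorem Commute.of_defect {a c d : E} (hac : Commute a c) (hac' : Commute a (star c))
    (hd : 0 ≤ d) (hdsq : d * d = 1 - star c * c) : Commute a d :=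
  Commute.of_mul_self (hdsq ▸ (Commute.one_right a).sub_right (hac'.mul_right hac)) hd

theorem defect_mul_eq_mul_defect {c d d' : E} (hd : 0 ≤ d) (hd' : 0 ≤ d')
    (hdsq : d * d = 1 - star c * c) (hd'sq : d' * d' = 1 - c * star c) : d' * c = c * d := by
  refine (SemiconjBy.of_mul_self ?_ hd hd').eq.symm
  rw [SemiconjBy, hdsq, hd'sq, mul_sub, sub_mul, mul_one, one_mul, mul_assoc]

theorem pow_mul_pow_succ_eq_conj_inv_sqrt {a s x : E} (hs : 0 ≤ s) (hssa : s * s * a = 1)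
    (hass : a * (s * s) = 1) (hax : Commute a x) (m : ℕ) :
    a ^ m * x ^ (m + 1) = s * (a * x) ^ (m + 1) * s := by
  have hs_pow : Commute s ((a * x) ^ (m + 1)) :=
    ((Commute.of_inv_mul_self (.refl a) hs hssa hass).mul_left
      (Commute.of_inv_mul_self hax.symm hs hssa hass)).symm.pow_right _
  calc a ^ m * x ^ (m + 1) = a ^ m * x ^ (m + 1) * (a * (s * s)) := by rw [hass, mul_one]
    _ = (a * x) ^ (m + 1) * (s * s) := by
        rw [hax.mul_pow, pow_succ a m, mul_assoc, (hax.pow_right (m + 1)).symm.left_comm]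
        simp only [mul_assoc]
    _ = s * (a * x) ^ (m + 1) * s := by rw [← mul_assoc, ← hs_pow.eq]

end Defect

theorem Commute.one_add_mul_sub_two_mul {R : Type*} [Ring R] {z a k : R} (hza : Commute z a)
    (hzk : Commute z k) : Commute z (1 + a * (a - 2) * k) :=
  (Commute.one_right z).add_right
    ((hza.mul_right (hza.sub_right (Commute.ofNat_right z 2))).mul_right hzk)

theorem transfer_mul_eq {R : Type*} [Ring R] {a b c d d' : R} (hac : Commute a c)
    (had' : Commute a d') (hbd : Commute b d) (hd' : d' * c = c * d) :
    (c * b * d + d' * (a - 1) * c * b) * c = c * (a * (b * d * c)) := by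
  have hd'_term : d' * (a - 1) * c * b * c = (a - 1) * (c * b * d * c) := by
    rw [← (had'.sub_left (Commute.one_left d')).eq, mul_assoc (a - 1), hd']
    simp only [mul_assoc]
    rw [← mul_assoc d b c, ← hbd.eq, mul_assoc]
  rw [add_mul, hd'_term, sub_mul, one_mul, add_sub_cancel]
  simp only [mul_assoc]
  rw [← mul_assoc a c, hac.eq, mul_assoc]

section Block

variable {𝕜 F : Type*} [NormedField 𝕜] [NormedAddCommGroup F] [NormedSpace 𝕜 F]
  (p : ENNReal) [Fact (1 ≤ p)]

theorem WithLp.fst_pow_succ_apply_of_factor (K₁ K₂ L₁ L₂ : F →L[𝕜] F)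
    (R : WithLp p (F × F) →L[𝕜] WithLp p (F × F))
    (hR : ∀ x : F × F, R ((WithLp.equiv p (F × F)).symm x) = (WithLp.equiv p (F × F)).symm
      (K₁ (L₁ x.1 + L₂ x.2), K₂ (L₁ x.1 + L₂ x.2))) (m : ℕ) (h : F) :
    ((WithLp.equiv p (F × F)) ((R ^ (m + 1)) ((WithLp.equiv p (F × F)).symm (h, 0)))).1 =
      (K₁ * (L₁ * K₁ + L₂ * K₂) ^ m * L₁) h := by
  set e := WithLp.equiv p (F × F)
  let k : F → WithLp p (F × F) := fun y ↦ e.symm (K₁ y, K₂ y)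
  let l : WithLp p (F × F) → F := fun x ↦ L₁ (e x).1 + L₂ (e x).2
  have hRkl : ⇑R = k ∘ l := funext fun x ↦ by simpa [k, l] using hR (e x)
  have hlk : l ∘ k = ⇑(L₁ * K₁ + L₂ * K₂) := funext fun y ↦ by simp [k, l]
  have hsemi : Function.Semiconj k (l ∘ k) (k ∘ l) := fun _ ↦ rfl
  rw [FunLike.coe_pow_eq_iterate, hRkl, Function.iterate_succ_apply, Function.comp_apply,
    ← hsemi.iterate_right, hlk, ← FunLike.coe_pow_eq_iterate]
  simp [k, l]

end Block

open ContinuousLinearMap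

theorem stmt_18_general {H : Type*} [NormedAddCommGroup H] [InnerProductSpace ℂ H] [CompleteSpace H]
    (A C : H →L[ℂ] H) (hAC : A * C = C * A) (hApos : A.IsPositive)
    (A' : H →L[ℂ] H) (hA' : A * A' = 1 ∧ A' * A = 1)
    (S : H →L[ℂ] H) (hSpos : S.IsPositive) (hSsq : S * S = A')
    (B : H →L[ℂ] H) (hBpos : B.IsPositive)
    (hBsq : B * B * (1 + A * (A - 2) * (adjoint C * C)) = 1 ∧
      (1 + A * (A - 2) * (adjoint C * C)) * (B * B) = 1)
    (D : H →L[ℂ] H) (hDpos : D.IsPositive) (hDsq : D * D = 1 - adjoint C * C)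
    (Dst : H →L[ℂ] H) (hDstpos : Dst.IsPositive) (hDstsq : Dst * Dst = 1 - C * adjoint C)
    (T : H →L[ℂ] H) (hT : T = A * B * D * C)
    (R : WithLp 2 (H × H) →L[ℂ] WithLp 2 (H × H))
    (hR : ∀ x : H × H,
      R ((WithLp.equiv 2 (H × H)).symm x) = (WithLp.equiv 2 (H × H)).symm
        (B (D (C x.1)) + B (D (Dst x.2)),
         (A - 1) (C (B (C x.1))) + (A - 1) (C (B (Dst x.2))))) :
    ∀ n : ℕ, 1 ≤ n →
      (∀ h : H,
        ((WithLp.equiv 2 (H × H))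
            ((R ^ n) ((WithLp.equiv 2 (H × H)).symm (h, 0)))).1 =
          (A ^ (n - 1) * (B * D * C) ^ n) h) ∧
      A ^ (n - 1) * (B * D * C) ^ n = S * T ^ n * S := by
  intro n hn
  obtain ⟨m, rfl⟩ : ∃ m, n = m + 1 := ⟨n - 1, by omega⟩
  rw [Nat.add_sub_cancel]
  simp only [← star_eq_adjoint] at hBsq hDsq hDstsq
  replace hAC : Commute A C := hAC
  have hAC' : Commute A (star C) := by
    simpa [hApos.isSelfAdjoint.star_eq] using hAC.star_star
  have hAK : Commute A (star C * C) := hAC'.mul_right hAC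
  have hB := (nonneg_iff_isPositive B).mpr hBpos
  have hD := (nonneg_iff_isPositive D).mpr hDpos
  have hDst := (nonneg_iff_isPositive Dst).mpr hDstpos
  have hAB : Commute A B :=
    ((Commute.refl A).one_add_mul_sub_two_mul hAK).of_inv_mul_self hB hBsq.1 hBsq.2
  have hAD : Commute A D := hAC.of_defect hAC' hD hDsq
  have hADst : Commute A Dst := hAC'.of_defect (by rwa [star_star]) hDst (by rwa [star_star])
  have hBD : Commute B D :=
    (hDsq ▸ (Commute.one_left _).sub_left (hAK.symm.one_add_mul_sub_two_mul (.refl _)) :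
      Commute (D * D) _).of_inv_mul_self hB hBsq.1 hBsq.2 |>.symm.of_mul_self hD
  have hDstC : Dst * C = C * D := defect_mul_eq_mul_defect hD hDst hDsq hDstsq
  set X := B * D * C
  have hAX : Commute A X := (hAB.mul_right hAD).mul_right hAC
  have hTX : T = A * X := by simp only [hT, X, mul_assoc]
  have hM : SemiconjBy C (A * X) (C * B * D + Dst * (A - 1) * C * B) :=
    (transfer_mul_eq hAC hADst hBD hDstC).symm
  constructor
  · intro h
    rw [WithLp.fst_pow_succ_apply_of_factor 2 (B * D) ((A - 1) * C * B) C Dst R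
      (fun x ↦ by simpa [map_add] using hR x) m h]
    congr 1
    calc B * D * (C * B * D + Dst * (A - 1) * C * B) ^ m * C = B * D * C * (A * X) ^ m := by
          rw [mul_assoc _ _ C, ← (hM.pow_right m).eq, ← mul_assoc]
      _ = A ^ m * X ^ (m + 1) := by
          rw [hAX.mul_pow, ← mul_assoc, ← (hAX.pow_left m).eq, mul_assoc, ← pow_succ']
  · rw [hTX]
    exact pow_mul_pow_succ_eq_conj_inv_sqrt ((nonneg_iff_isPositive S).mpr hSpos)
      (by rw [hSsq, hA'.2]) (by rw [hSsq, hA'.1]) hAX m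

/-- With `A, C` commuting, `A` positive invertible (with `S = A^{-1/2}`), `‖C‖ ≤ 1`,
`B = (I + A(A-2I)C*C)^{-1/2}`, `D = (I - C*C)^{1/2}`, `D_* = (I - CC*)^{1/2}`,
`T = A B D C`, and `R` the block operator `[[BDC, BDD_*], [(A-I)CBC, (A-I)CBD_*]]` on
`H ⊕ H`, the `(0,0)` block of `Rⁿ` is `A^{n-1}(BDC)ⁿ = A^{-1/2} Tⁿ A^{-1/2}` for all
`n ≥ 1`. -/
theorem stmt_18 {H : Type*} [NormedAddCommGroup H] [InnerProductSpace ℂ H] [CompleteSpace H]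
    (A C : H →L[ℂ] H) (hAC : A * C = C * A) (hApos : A.IsPositive) (hC : ‖C‖ ≤ 1)
    (A' : H →L[ℂ] H) (hA' : A * A' = 1 ∧ A' * A = 1)
    (S : H →L[ℂ] H) (hSpos : S.IsPositive) (hSsq : S * S = A')
    (B : H →L[ℂ] H) (hBpos : B.IsPositive)
    (hBsq : B * B * (1 + A * (A - 2) * (adjoint C * C)) = 1 ∧
      (1 + A * (A - 2) * (adjoint C * C)) * (B * B) = 1)
    (D : H →L[ℂ] H) (hDpos : D.IsPositive) (hDsq : D * D = 1 - adjoint C * C)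
    (Dst : H →L[ℂ] H) (hDstpos : Dst.IsPositive) (hDstsq : Dst * Dst = 1 - C * adjoint C)
    (T : H →L[ℂ] H) (hT : T = A * B * D * C)
    (R : WithLp 2 (H × H) →L[ℂ] WithLp 2 (H × H))
    (hR : ∀ x : H × H,
      R ((WithLp.equiv 2 (H × H)).symm x) = (WithLp.equiv 2 (H × H)).symm
        (B (D (C x.1)) + B (D (Dst x.2)),
         (A - 1) (C (B (C x.1))) + (A - 1) (C (B (Dst x.2))))) :
    ∀ n : ℕ, 1 ≤ n →
      (∀ h : H,
        ((WithLp.equiv 2 (H × H))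
            ((R ^ n) ((WithLp.equiv 2 (H × H)).symm (h, 0)))).1 =
          (A ^ (n - 1) * (B * D * C) ^ n) h) ∧
      A ^ (n - 1) * (B * D * C) ^ n = S * T ^ n * S :=
  stmt_18_general A C hAC hApos A' hA' S hSpos hSsq B hBpos hBsq D hDpos hDsq Dst hDstpos hDstsq T
    hT R hR
end
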